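/- arXiv:1807.11601 — 5 statements merged into one kernel-verified Lean document; each statement's English description precedes it below -/
import Mathlib

section
/- Every path-component of a ladder Y is itself a ladder; that is, each equivalence class Y₁ of the path relation on Y satisfies the ladder exchange condition: whenever (i,j),(p,q) ∈ Y₁ with i ≤ p and j ≤ q, also (i,q),(p,j) ∈ Y₁. -/
set_option maxHeartbeats 1000000
set_option synthInstance.maxHeartbeats 1000000

open CategoryTheory

namespace LadderDet

/-- The position `p` lies in the `m × n` grid `{1,…,m} × {1,…,n}`. -/
def InGrid (m n : ℕ) (p : ℕ × ℕ) : Prop :=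
  1 ≤ p.1 ∧ p.1 ≤ m ∧ 1 ≤ p.2 ∧ p.2 ≤ n

/-- `Y` is a ladder in the `m × n` grid. -/
def IsLadder (m n : ℕ) (Y : Set (ℕ × ℕ)) : Prop :=
  (∀ p ∈ Y, InGrid m n p) ∧
  ∀ i j p q : ℕ, (i, j) ∈ Y → (p, q) ∈ Y → i ≤ p → j ≤ q → (i, q) ∈ Y ∧ (p, j) ∈ Y

/-- A ladder together with the standard nontriviality assumptions:
`(1,n), (m,1) ∈ Y` and every row and every column of the grid meets `Y`. -/
def StdLadder (m n : ℕ) (Y : Set (ℕ × ℕ)) : Prop :=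
  IsLadder m n Y ∧ (1, n) ∈ Y ∧ (m, 1) ∈ Y ∧
  (∀ i, 1 ≤ i → i ≤ m → ∃ j, (i, j) ∈ Y) ∧
  (∀ j, 1 ≤ j → j ≤ n → ∃ i, (i, j) ∈ Y)

/-- Two positions differ by exactly `1` in exactly one coordinate. -/
def AdjStep (p q : ℕ × ℕ) : Prop :=
  (p.1 = q.1 ∧ (p.2 + 1 = q.2 ∨ q.2 + 1 = p.2)) ∨
  (p.2 = q.2 ∧ (p.1 + 1 = q.1 ∨ q.1 + 1 = p.1))

/-- There is a path in `Y` from `p` to `q`. -/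
def HasPath (Y : Set (ℕ × ℕ)) (p q : ℕ × ℕ) : Prop :=
  p ∈ Y ∧ q ∈ Y ∧
    Relation.ReflTransGen (fun a b => a ∈ Y ∧ b ∈ Y ∧ AdjStep a b) p q

/-- `Y` is path-connected. -/
def PathConnected (Y : Set (ℕ × ℕ)) : Prop :=
  ∀ p ∈ Y, ∀ q ∈ Y, HasPath Y p q

/-- `M` is (the set of entries of) a `t × t` minor of `Y`. -/
def IsMinor (t : ℕ) (Y : Set (ℕ × ℕ)) (M : Set (ℕ × ℕ)) : Prop :=
  ∃ r c : Fin t → ℕ, StrictMono r ∧ StrictMono c ∧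
    (∀ u v, (r u, c v) ∈ Y) ∧ M = {p | ∃ u v, p = (r u, c v)}

/-- `Y` is `t`-disconnected. -/
def TDisconnected (m n t : ℕ) (Y : Set (ℕ × ℕ)) : Prop :=
  ∃ Z₁ Z₂ : Set (ℕ × ℕ), Z₁.Nonempty ∧ Z₂.Nonempty ∧
    IsLadder m n Z₁ ∧ IsLadder m n Z₂ ∧ Z₁ ∩ Z₂ = ∅ ∧ Z₁ ∪ Z₂ = Y ∧
    ∀ M, IsMinor t Y M → M ⊆ Z₁ ∨ M ⊆ Z₂

/-- `Y` is `t`-connected. -/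
def TConnected (m n t : ℕ) (Y : Set (ℕ × ℕ)) : Prop := ¬ TDisconnected m n t Y

/-- `p` is a lower inside corner of `Y`. -/
def IsLowerCorner (Y : Set (ℕ × ℕ)) (p : ℕ × ℕ) : Prop :=
  p ∈ Y ∧ (p.1 - 1, p.2) ∈ Y ∧ (p.1, p.2 - 1) ∈ Y ∧ (p.1 - 1, p.2 - 1) ∉ Y

/-- `p` is an upper inside corner of `Y`. -/
def IsUpperCorner (Y : Set (ℕ × ℕ)) (p : ℕ × ℕ) : Prop :=
  p ∈ Y ∧ (p.1 + 1, p.2) ∈ Y ∧ (p.1, p.2 + 1) ∈ Y ∧ (p.1 + 1, p.2 + 1) ∉ Y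

/-- `Y` is one-sided: path-connected and with no lower or no upper inside corners. -/
def OneSided (Y : Set (ℕ × ℕ)) : Prop :=
  PathConnected Y ∧
  ((∀ p, ¬ IsLowerCorner Y p) ∨ (∀ p, ¬ IsUpperCorner Y p))

/-- `Y` is two-sided: path-connected with at least one lower and one upper inside corner. -/
def TwoSided (Y : Set (ℕ × ℕ)) : Prop :=
  PathConnected Y ∧ (∃ p, IsLowerCorner Y p) ∧ (∃ p, IsUpperCorner Y p)

section Algebra

variable (k : Type) [Field k]

/-- The `t × t` minor of the generic matrix determined by rows `r` and columns `c`,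
as an element of the polynomial ring `k[Y]`. -/
noncomputable def minorPoly {t : ℕ} {Y : Set (ℕ × ℕ)} (r c : Fin t → ℕ)
    (h : ∀ u v, (r u, c v) ∈ Y) : MvPolynomial Y k :=
  (Matrix.of fun u v : Fin t =>
    (MvPolynomial.X ⟨(r u, c v), h u v⟩ : MvPolynomial Y k)).det

/-- The ideal `I_t(Y) ⊆ k[Y]` generated by all `t × t` minors of `X` lying in `Y`. -/
noncomputable def minorIdeal (t : ℕ) (Y : Set (ℕ × ℕ)) : Ideal (MvPolynomial Y k) :=
  Ideal.span {f | ∃ (r c : Fin t → ℕ) (_ : StrictMono r) (_ : StrictMono c)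
    (h : ∀ u v, (r u, c v) ∈ Y), f = minorPoly k r c h}

/-- The ladder determinantal ring `R_t(Y) = k[Y]/I_t(Y)`. -/
abbrev LadderRing (t : ℕ) (Y : Set (ℕ × ℕ)) : Type :=
  MvPolynomial Y k ⧸ minorIdeal k t Y

/-- The residue `x_{ij}` of the variable `X_{ij}` in `R_t(Y)`. -/
noncomputable def xres (t : ℕ) {Y : Set (ℕ × ℕ)} (p : ℕ × ℕ) (hp : p ∈ Y) :
    LadderRing k t Y :=
  Ideal.Quotient.mk (minorIdeal k t Y) (MvPolynomial.X ⟨p, hp⟩)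

/-- The ideal of `R_2(Y)` generated by the residues of the variables in row `r`
(an ideal of type `𝔮`). -/
noncomputable def rowIdeal (Y : Set (ℕ × ℕ)) (r : ℕ) : Ideal (LadderRing k 2 Y) :=
  Ideal.span {z | ∃ q, ∃ h : (r, q) ∈ Y, z = xres k 2 (r, q) h}

/-- The ideal of `R_2(Y)` generated by the residues of the variables in column `b`
(an ideal of type `𝔮'`). -/
noncomputable def colIdeal (Y : Set (ℕ × ℕ)) (b : ℕ) : Ideal (LadderRing k 2 Y) :=
  Ideal.span {z | ∃ p, ∃ h : (p, b) ∈ Y, z = xres k 2 (p, b) h}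

/-- The ideal `𝔭` of `R_2(Y)` generated by the residues of the variables weakly
northwest of the position `(c, d)`. -/
noncomputable def cornerIdeal (Y : Set (ℕ × ℕ)) (c d : ℕ) : Ideal (LadderRing k 2 Y) :=
  Ideal.span {z | ∃ p q, ∃ h : (p, q) ∈ Y, p ≤ c ∧ q ≤ d ∧ z = xres k 2 (p, q) h}

end Algebra

/-- An ideal of `k[Y]` is a monomial ideal if it is generated by monomials. -/
def IsMonomialIdeal {k : Type} [Field k] {Y : Set (ℕ × ℕ)}
    (M : Ideal (MvPolynomial Y k)) : Prop :=
  ∃ S : Set (Y →₀ ℕ), M = Ideal.span ((fun d => MvPolynomial.monomial d (1 : k)) '' S)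

/-- A finitely generated module `C` over a commutative ring `R` is semidualizing if
the natural homothety map `R → Hom_R(C, C)` is bijective and `Ext^i_R(C, C) = 0` for
all `i ≥ 1`. -/
def IsSemidualizing {R : Type} [CommRing R] (C : ModuleCat.{0} R) : Prop :=
  Module.Finite R C ∧
  Function.Bijective (LinearMap.lsmul R C) ∧
  ∀ i : ℕ, 1 ≤ i →
    Subsingleton (((Ext R (ModuleCat.{0} R) i).obj (Opposite.op C)).obj C)

/-- `C` has finite injective dimension: for some `n`, `Ext^i_R(M, C) = 0` for all
modules `M` and all `i > n`. -/
def HasFiniteInjDim {R : Type} [CommRing R] (C : ModuleCat.{0} R) : Prop :=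
  ∃ n : ℕ, ∀ i : ℕ, n < i → ∀ M : ModuleCat.{0} R,
    Subsingleton (((Ext R (ModuleCat.{0} R) i).obj (Opposite.op M)).obj C)

section PathComponent

variable {Y : Set (ℕ × ℕ)}

theorem AdjStep.symm {p q : ℕ × ℕ} (h : AdjStep p q) : AdjStep q p := by
  unfold AdjStep at *
  omega

theorem AdjStep.eq_or_adjStep_snd {p q : ℕ × ℕ} (h : AdjStep p q) (c : ℕ) :
    (c, p.2) = (c, q.2) ∨ AdjStep (c, p.2) (c, q.2) := by
  simp only [AdjStep, Prod.mk.injEq, true_and] at *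
  omega

theorem AdjStep.eq_or_adjStep_fst {p q : ℕ × ℕ} (h : AdjStep p q) (c : ℕ) :
    (p.1, c) = (q.1, c) ∨ AdjStep (p.1, c) (q.1, c) := by
  simp only [AdjStep, Prod.mk.injEq, true_and, and_true] at *
  omega

theorem HasPath.refl {p : ℕ × ℕ} (hp : p ∈ Y) : HasPath Y p p :=
  ⟨hp, hp, .refl⟩

theorem HasPath.trans {a b c : ℕ × ℕ} (hab : HasPath Y a b) (hbc : HasPath Y b c) :
    HasPath Y a c :=
  ⟨hab.1, hbc.2.1, hab.2.2.trans hbc.2.2⟩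

theorem HasPath.symm {a b : ℕ × ℕ} (h : HasPath Y a b) : HasPath Y b a :=
  ⟨h.2.1, h.1, Relation.ReflTransGen.mono (fun _ _ hxy => ⟨hxy.2.1, hxy.1, hxy.2.2.symm⟩) _ _
    (Relation.reflTransGen_swap.mpr h.2.2)⟩

theorem HasPath.of_eq_or_adjStep {a b c : ℕ × ℕ} (hab : HasPath Y a b) (hc : c ∈ Y)
    (hbc : b = c ∨ AdjStep b c) : HasPath Y a c := by
  rcases hbc with rfl | hbc
  · exact hab
  · exact ⟨hab.1, hc, hab.2.2.tail ⟨hab.2.1, hc, hbc⟩⟩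

/- Walking along a path from `a` to `b ≥ a`, the shadows `(a.1, x.2)` and `(x.1, a.2)` of the
current position `x` move by at most one step, and they stay in `Y` by the ladder condition as long
as `x ≥ a`; once `x` leaves the quadrant above `a`, the endpoint `b` shares a row or a column
with `a`, and its corners are `a` and `b` themselves. -/
theorem HasPath.corners_of_le {m n : ℕ} (hY : IsLadder m n Y) {a b : ℕ × ℕ}
    (h : HasPath Y a b) (hab : a ≤ b) :
    HasPath Y a (a.1, b.2) ∧ HasPath Y a (b.1, a.2) := by
  obtain ⟨ha, -, hpath⟩ := h
  induction hpath with
  | refl => exact ⟨HasPath.refl ha, HasPath.refl ha⟩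
  | @tail x b hax hxb ih =>
    obtain ⟨hx, hb, hadj⟩ := hxb
    have hcorners := hY.2 a.1 a.2 b.1 b.2 ha hb hab.1 hab.2
    by_cases hax' : a ≤ x
    · obtain ⟨hrow, hcol⟩ := ih hax'
      exact ⟨hrow.of_eq_or_adjStep hcorners.1 (hadj.eq_or_adjStep_snd a.1),
        hcol.of_eq_or_adjStep hcorners.2 (hadj.eq_or_adjStep_fst a.2)⟩
    · have hline : a.1 = b.1 ∨ a.2 = b.2 := by
        simp only [Prod.le_def, not_and_or, not_le] at hax' hab
        unfold AdjStep at hadj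
        omega
      have hpb : HasPath Y a b := ⟨ha, hb, hax.tail ⟨hx, hb, hadj⟩⟩
      rcases hline with h | h
      · exact ⟨h ▸ hpb, h ▸ HasPath.refl ha⟩
      · exact ⟨h ▸ HasPath.refl ha, h ▸ hpb⟩

end PathComponent

theorem pathComponent_isLadder_general (m n : ℕ) (Y : Set (ℕ × ℕ)) (hY : IsLadder m n Y)
    (p₀ : ℕ × ℕ) (Y₁ : Set (ℕ × ℕ))
    (hY₁ : Y₁ = {q | HasPath Y p₀ q}) :
    IsLadder m n Y₁ := by
  subst hY₁
  refine ⟨fun p hp => hY.1 p hp.2.1, fun i j p q hij hpq hip hjq => ?_⟩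
  obtain ⟨hrow, hcol⟩ := (hij.symm.trans hpq).corners_of_le hY ⟨hip, hjq⟩
  exact ⟨hij.trans hrow, hij.trans hcol⟩

/-- Every path-component of a ladder is itself a ladder. -/
theorem pathComponent_isLadder (m n : ℕ) (Y : Set (ℕ × ℕ)) (hY : IsLadder m n Y)
    (p₀ : ℕ × ℕ) (hp₀ : p₀ ∈ Y) (Y₁ : Set (ℕ × ℕ))
    (hY₁ : Y₁ = {q | HasPath Y p₀ q}) :
    IsLadder m n Y₁ :=
  pathComponent_isLadder_general m n Y hY p₀ Y₁ hY₁

end LadderDet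
end

section
/- Let Y be a 2-connected ladder and R = R_2(Y). For each i = 1,…,h+1 and every natural number e, the e-th symbolic power of the prime ideal 𝔮_i equals its e-th ordinary power: 𝔮_i^{(e)} = 𝔮_i^e. Equivalently, for all x, s ∈ R with s ∉ 𝔮_i and s·x ∈ 𝔮_i^e, one has x ∈ 𝔮_i^e. -/
set_option maxHeartbeats 1000000
set_option synthInstance.maxHeartbeats 1000000

open CategoryTheory

namespace LadderDet

/-!
Under the Segre map `X_{ij} ↦ u_i v_j` into `k[u, v]`, two monomials of `k[Y]` have the same
image exactly when they have the same row and column contents, and such monomials are congruent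
modulo `I_2(Y)`: both can be brought by one `2 × 2` minor of the ladder to contain the entry in
their common corner (largest row, smallest column), which is then cancelled. Hence `R_2(Y)`
embeds into `k[u, v]`, and `𝔮^e` is the set of elements whose image is divisible by `u_r ^ e`.
As `u_r` is prime, `u_r ∤ s` and `u_r ^ e ∣ s x` give `u_r ^ e ∣ x`.
-/

open MvPolynomial

section MonomialMap

variable {σ τ R : Type*} [CommRing R]

open AddMonoidAlgebra (mapDomain)

theorem exists_mem_support_of_mem_support_mapDomain {E : (σ →₀ ℕ) → (τ →₀ ℕ)}
    {p : MvPolynomial σ R} {t : τ →₀ ℕ}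
    (ht : t ∈ MvPolynomial.support (mapDomain E p)) :
    ∃ μ ∈ p.support, E μ = t := by
  classical
  exact Finset.mem_image.mp (Finsupp.mapDomain_support ht)

theorem mem_of_forall_mem_support_mapDomain {E : (σ →₀ ℕ) → (τ →₀ ℕ)}
    {I J : Ideal (MvPolynomial σ R)}
    (hI : ∀ μ ν, E μ = E ν → monomial μ (1 : R) - monomial ν 1 ∈ I) (hIJ : I ≤ J)
    {p : MvPolynomial σ R}
    (hp : ∀ μ, E μ ∈ MvPolynomial.support (mapDomain E p) → monomial μ (1 : R) ∈ J) :
    p ∈ J := by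
  -- Moving every monomial to a fixed representative of its `E`-fiber changes `p` only modulo `I`.
  set rep := Function.invFun E
  set L := AddMonoidAlgebra.mapDomainLinearMap R R rep
  have hrep : ∀ μ, E (rep (E μ)) = E μ := fun μ => Function.invFun_eq ⟨μ, rfl⟩
  have hsub : ∀ q : MvPolynomial σ R, q - L (mapDomain E q) ∈ I := by
    intro q
    induction q using MvPolynomial.induction_on' with
    | monomial μ c =>
      rw [← single_eq_monomial, AddMonoidAlgebra.mapDomain_single,
        AddMonoidAlgebra.mapDomainLinearMap_single, single_eq_monomial, single_eq_monomial,
        ← mul_one c, ← smul_eq_mul, map_smul, map_smul, ← smul_sub, smul_eq_C_mul]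
      exact Ideal.mul_mem_left _ _ (hI _ _ (hrep μ).symm)
    | add q₁ q₂ h₁ h₂ =>
      rw [AddMonoidAlgebra.mapDomain_add, map_add, add_sub_add_comm]
      exact add_mem h₁ h₂
  have hL : L (mapDomain E p) ∈ J := by
    set g : MvPolynomial τ R := mapDomain E p
    rw [g.as_sum, map_sum]
    refine sum_mem fun t ht => ?_
    obtain ⟨μ, -, rfl⟩ := exists_mem_support_of_mem_support_mapDomain ht
    rw [← single_eq_monomial, AddMonoidAlgebra.mapDomainLinearMap_single, single_eq_monomial,
      ← mul_one (coeff _ g), ← smul_eq_mul, map_smul, smul_eq_C_mul]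
    exact J.mul_mem_left _ (hp _ (by rwa [hrep]))
  simpa using add_mem (hIJ (hsub p)) hL

theorem le_of_X_pow_dvd {g : MvPolynomial τ R} {i : τ} {e : ℕ} (h : X i ^ e ∣ g)
    {t : τ →₀ ℕ} (ht : t ∈ g.support) : e ≤ t i := by
  rw [← Ideal.mem_span_singleton, X_pow_eq_monomial,
    ← Set.image_singleton (f := fun s => monomial s (1 : R)), mem_ideal_span_monomial_image] at h
  obtain ⟨s, rfl, hs⟩ := h t ht
  simpa using hs i

end MonomialMap

section Segre

variable {k : Type} [Field k] {Y : Set (ℕ × ℕ)}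

variable (Y) in
/-- The exponent of `∏ (u_i v_j) ^ μ (i, j)`, the image of `X ^ μ` under the Segre map; the
variable `u_i` is indexed by `inl i` and `v_j` by `inr j`. -/
noncomputable def segreExp : (Y →₀ ℕ) →+ ((ℕ ⊕ ℕ) →₀ ℕ) where
  toFun μ := Finsupp.sumElim (μ.mapDomain fun v => v.1.1) (μ.mapDomain fun v => v.1.2)
  map_zero' := by simp
  map_add' μ ν := by ext (_ | _) <;> simp [Finsupp.mapDomain_add]

variable (k Y) in
noncomputable def segre : MvPolynomial Y k →+* MvPolynomial (ℕ ⊕ ℕ) k :=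
  AddMonoidAlgebra.mapDomainRingHom k (segreExp Y)

theorem segreExp_single (v : Y) (c : ℕ) :
    segreExp Y (Finsupp.single v c) =
      Finsupp.single (Sum.inl v.1.1) c + Finsupp.single (Sum.inr v.1.2) c := by
  simp [segreExp]

theorem segreExp_apply_inl (μ : Y →₀ ℕ) (i : ℕ) :
    segreExp Y μ (Sum.inl i) = μ.mapDomain (fun v => v.1.1) i := rfl

theorem segreExp_apply_inr (μ : Y →₀ ℕ) (j : ℕ) :
    segreExp Y μ (Sum.inr j) = μ.mapDomain (fun v => v.1.2) j := rfl

theorem segre_monomial (μ : Y →₀ ℕ) (c : k) :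
    segre k Y (monomial μ c) = monomial (segreExp Y μ) c :=
  AddMonoidAlgebra.mapDomain_single

theorem segre_X (v : Y) : segre k Y (X v) = X (Sum.inl v.1.1) * X (Sum.inr v.1.2) := by
  rw [X, segre_monomial, segreExp_single, X, X, monomial_mul, one_mul]

theorem minorIdeal_le_ker_segre : minorIdeal k 2 Y ≤ RingHom.ker (segre k Y) := by
  rw [minorIdeal, Ideal.span_le]
  rintro _ ⟨r, c, -, -, h, rfl⟩
  simp only [SetLike.mem_coe, RingHom.mem_ker, minorPoly, Matrix.det_fin_two, Matrix.of_apply,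
    map_sub, map_mul, segre_X]
  ring

theorem image_fst_support_eq {μ ν : Y →₀ ℕ} (h : segreExp Y μ = segreExp Y ν) :
    μ.support.image (fun v => v.1.1) = ν.support.image (fun v => v.1.1) := by
  simp_rw [← Finsupp.mapDomain_support_of_subsingletonAddUnits]
  congr 1
  ext i
  simp_rw [← segreExp_apply_inl, h]

theorem image_snd_support_eq {μ ν : Y →₀ ℕ} (h : segreExp Y μ = segreExp Y ν) :
    μ.support.image (fun v => v.1.2) = ν.support.image (fun v => v.1.2) := by
  simp_rw [← Finsupp.mapDomain_support_of_subsingletonAddUnits]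
  congr 1
  ext j
  simp_rw [← segreExp_apply_inr, h]

theorem eq_zero_of_segreExp_eq_zero {μ : Y →₀ ℕ} (h : segreExp Y μ = 0) : μ = 0 := by
  rw [← Finsupp.mapDomain_apply_eq_zero_iff_of_subsingletonAddUnits (fun v : Y => v.1.1)]
  ext i
  rw [← segreExp_apply_inl, h, Finsupp.zero_apply, Finsupp.zero_apply]

end Segre

section Straightening

variable {k : Type} [Field k] {m n : ℕ} {Y : Set (ℕ × ℕ)}

theorem monomial_sub_monomial_mem_of_exchange (hY : IsLadder m n Y) (ρ : Y →₀ ℕ) {w v : Y}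
    (hrow : w.1.1 < v.1.1) (hcol : w.1.2 < v.1.2) :
    ∃ (a c : Y), a.1 = (w.1.1, v.1.2) ∧ c.1 = (v.1.1, w.1.2) ∧
      monomial (ρ + Finsupp.single w 1 + Finsupp.single v 1) (1 : k) -
        monomial (ρ + Finsupp.single a 1 + Finsupp.single c 1) 1 ∈ minorIdeal k 2 Y := by
  obtain ⟨ha, hc⟩ := hY.2 _ _ _ _ w.2 v.2 hrow.le hcol.le
  refine ⟨⟨_, ha⟩, ⟨_, hc⟩, rfl, rfl, ?_⟩
  simp only [monomial_add_single, pow_one, mul_assoc, ← mul_sub]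
  refine Ideal.mul_mem_left _ _ (Ideal.subset_span ⟨![w.1.1, v.1.1], ![w.1.2, v.1.2], ?_, ?_,
    fun u u' => ?_, ?_⟩)
  · exact fun x y hxy => by fin_cases x <;> fin_cases y <;> simp_all
  · exact fun x y hxy => by fin_cases x <;> fin_cases y <;> simp_all
  · fin_cases u <;> fin_cases u' <;> simp [w.2, v.2, ha, hc]
  · rw [minorPoly, Matrix.det_fin_two]
    rfl

theorem exists_corner (hY : IsLadder m n Y) {μ : Y →₀ ℕ} {i j : ℕ}
    (hi : IsGreatest (μ.support.image fun v => v.1.1 : Set ℕ) i)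
    (hj : IsLeast (μ.support.image fun v => v.1.2 : Set ℕ) j) :
    ∃ c : Y, c.1 = (i, j) ∧ ∃ μ₀ : Y →₀ ℕ,
      segreExp Y (μ₀ + Finsupp.single c 1) = segreExp Y μ ∧ μ₀.degree + 1 = μ.degree ∧
      monomial μ (1 : k) - monomial (μ₀ + Finsupp.single c 1) 1 ∈ minorIdeal k 2 Y := by
  have of_mem : ∀ c ∈ μ.support, ∃ μ₀ : Y →₀ ℕ,
      segreExp Y (μ₀ + Finsupp.single c 1) = segreExp Y μ ∧ μ₀.degree + 1 = μ.degree ∧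
      monomial μ (1 : k) - monomial (μ₀ + Finsupp.single c 1) 1 ∈ minorIdeal k 2 Y := by
    intro c hc
    obtain ⟨μ₀, rfl⟩ : ∃ μ₀, μ₀ + Finsupp.single c 1 = μ :=
      ⟨_, Finsupp.sub_add_single_one_cancel (Finsupp.mem_support_iff.mp hc)⟩
    exact ⟨μ₀, rfl, by simp, by simp⟩
  obtain ⟨v, hv, rfl⟩ := Finset.mem_image.mp hi.1
  obtain ⟨w, hw, rfl⟩ := Finset.mem_image.mp hj.1
  rcases (hi.2 (Finset.mem_image_of_mem _ hw)).lt_or_eq with hrow | hrow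
  · rcases (hj.2 (Finset.mem_image_of_mem _ hv)).lt_or_eq with hcol | hcol
    · have hvw : v ≠ w := fun h => hrow.ne (by rw [h])
      have hv : μ v ≠ 0 := Finsupp.mem_support_iff.mp hv
      have hw' : (μ - Finsupp.single v 1 : Y →₀ ℕ) w ≠ 0 := by
        simpa [Finsupp.single_apply, hvw] using hw
      obtain ⟨ρ, rfl⟩ : ∃ ρ, ρ + Finsupp.single w 1 + Finsupp.single v 1 = μ :=
        ⟨_, by rw [Finsupp.sub_add_single_one_cancel hw', Finsupp.sub_add_single_one_cancel hv]⟩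
      obtain ⟨a, c, ha, hc, hmem⟩ :=
        monomial_sub_monomial_mem_of_exchange (k := k) hY ρ hrow hcol
      refine ⟨c, hc, ρ + Finsupp.single a 1, ?_, ?_, hmem⟩
      · simp only [map_add, segreExp_single, ha, hc]
        abel
      · simp only [map_add, Finsupp.degree_single]
    · exact ⟨v, Prod.ext rfl hcol.symm, of_mem v hv⟩
  · exact ⟨w, Prod.ext hrow rfl, of_mem w hw⟩

theorem monomial_sub_monomial_mem_minorIdeal (hY : IsLadder m n Y) {μ ν : Y →₀ ℕ}
    (h : segreExp Y μ = segreExp Y ν) :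
    monomial μ (1 : k) - monomial ν 1 ∈ minorIdeal k 2 Y := by
  induction hd : μ.degree generalizing μ ν with
  | zero =>
    obtain rfl : μ = 0 := (Finsupp.degree_eq_zero_iff μ).mp hd
    obtain rfl : ν = 0 := eq_zero_of_segreExp_eq_zero (by rw [← h, map_zero])
    simp
  | succ d ih =>
    have hμ : μ.support.Nonempty := Finsupp.support_nonempty_iff.mpr (by rintro rfl; simp at hd)
    obtain ⟨i, hi⟩ : ∃ i, IsGreatest (μ.support.image fun v => v.1.1 : Set ℕ) i :=
      ⟨_, Finset.isGreatest_max' _ (hμ.image _)⟩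
    obtain ⟨j, hj⟩ : ∃ j, IsLeast (μ.support.image fun v => v.1.2 : Set ℕ) j :=
      ⟨_, Finset.isLeast_min' _ (hμ.image _)⟩
    -- `μ` and `ν` have the same rows and columns, hence the same corner `c`.
    obtain ⟨c, hc, μ₀, hμE, hμd, hμI⟩ := exists_corner (k := k) hY hi hj
    rw [image_fst_support_eq h] at hi
    rw [image_snd_support_eq h] at hj
    obtain ⟨c', hc', ν₀, hνE, -, hνI⟩ := exists_corner (k := k) hY hi hj
    obtain rfl : c' = c := Subtype.ext (hc'.trans hc.symm)
    have h₀ : segreExp Y μ₀ = segreExp Y ν₀ := by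
      apply add_right_cancel (b := segreExp Y (Finsupp.single c' 1))
      rw [← map_add, ← map_add, hμE, hνE, h]
    have key : monomial μ (1 : k) - monomial ν 1 =
        (monomial μ 1 - monomial (μ₀ + Finsupp.single c' 1) 1) +
          X c' * (monomial μ₀ 1 - monomial ν₀ 1) -
          (monomial ν 1 - monomial (ν₀ + Finsupp.single c' 1) 1) := by
      simp only [monomial_add_single, pow_one]
      ring
    rw [key]
    exact sub_mem (add_mem hμI (Ideal.mul_mem_left _ _ (ih h₀ (by omega)))) hνI

end Straightening

section RowIdeal

variable {k : Type} [Field k] {m n : ℕ} {Y : Set (ℕ × ℕ)}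

theorem mk_monomial_mem_rowIdeal_pow {r e : ℕ} {μ : Y →₀ ℕ}
    (h : e ≤ segreExp Y μ (Sum.inl r)) :
    Ideal.Quotient.mk (minorIdeal k 2 Y) (monomial μ 1) ∈ rowIdeal k Y r ^ e := by
  induction e generalizing μ with
  | zero => simp
  | succ e ih =>
    have hr : r ∈ (μ.mapDomain fun v => v.1.1).support := by
      rw [Finsupp.mem_support_iff, ← segreExp_apply_inl]
      omega
    rw [Finsupp.mapDomain_support_of_subsingletonAddUnits, Finset.mem_image] at hr
    obtain ⟨⟨⟨_, q⟩, hv⟩, hμ, rfl⟩ := hr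
    obtain ⟨μ₀, rfl⟩ : ∃ μ₀, μ₀ + Finsupp.single ⟨_, hv⟩ 1 = μ :=
      ⟨_, Finsupp.sub_add_single_one_cancel (Finsupp.mem_support_iff.mp hμ)⟩
    rw [map_add, segreExp_single, Finsupp.add_apply, Finsupp.add_apply,
      Finsupp.single_eq_same, Finsupp.single_apply, if_neg Sum.inr_ne_inl] at h
    rw [monomial_add_single, pow_one, map_mul, Submodule.pow_succ]
    exact Ideal.mul_mem_mul (ih (by omega)) (Ideal.subset_span ⟨q, hv, rfl⟩)

theorem mk_mem_rowIdeal_pow_iff (hY : IsLadder m n Y) {r e : ℕ} (F : MvPolynomial Y k) :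
    Ideal.Quotient.mk (minorIdeal k 2 Y) F ∈ rowIdeal k Y r ^ e ↔
      X (Sum.inl r) ^ e ∣ segre k Y F := by
  constructor
  · intro hF
    set φ := Ideal.Quotient.lift _ (segre k Y) minorIdeal_le_ker_segre
    have hrow : Ideal.map φ (rowIdeal k Y r) ≤ Ideal.span {X (Sum.inl r)} := by
      rw [rowIdeal, Ideal.map_span, Ideal.span_le]
      rintro _ ⟨_, ⟨q, hq, rfl⟩, rfl⟩
      exact Ideal.mem_span_singleton.mpr ⟨X (Sum.inr q), segre_X _⟩
    have := Ideal.pow_right_mono hrow e (Ideal.map_pow φ _ e ▸ Ideal.mem_map_of_mem φ hF)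
    rwa [Ideal.span_singleton_pow, Ideal.mem_span_singleton] at this
  · intro hF
    refine mem_of_forall_mem_support_mapDomain
      (J := (rowIdeal k Y r ^ e).comap (Ideal.Quotient.mk _))
      (fun μ ν h => monomial_sub_monomial_mem_minorIdeal hY h) (fun x hx => ?_)
      (fun μ hμ => mk_monomial_mem_rowIdeal_pow (le_of_X_pow_dvd hF hμ))
    rw [Ideal.mem_comap, Ideal.Quotient.eq_zero_iff_mem.mpr hx]
    exact zero_mem _

end RowIdeal

theorem symbolicPower_q_eq_power_general (m n : ℕ) (k : Type) [Field k] (Y : Set (ℕ × ℕ))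
    (hY : StdLadder m n Y) (r : ℕ) (e : ℕ) (x s : LadderRing k 2 Y)
    (hs : s ∉ rowIdeal k Y r) (hsx : s * x ∈ rowIdeal k Y r ^ e) :
    x ∈ rowIdeal k Y r ^ e := by
  obtain ⟨F, rfl⟩ := Ideal.Quotient.mk_surjective x
  obtain ⟨S, rfl⟩ := Ideal.Quotient.mk_surjective s
  rw [← map_mul, mk_mem_rowIdeal_pow_iff hY.1, map_mul] at hsx
  rw [← pow_one (rowIdeal k Y r), mk_mem_rowIdeal_pow_iff hY.1, pow_one] at hs
  exact (mk_mem_rowIdeal_pow_iff hY.1 F).mpr (X_prime.pow_dvd_of_dvd_mul_left e hs hsx)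

/-- In `R = R_2(Y)` for a `2`-connected ladder `Y`, the symbolic powers
of the height-one primes `𝔮_i` (generated by the residues of the variables in row
`a_{i-1}`, where `a_0 = 1` and `a_1, …, a_h` are the rows of the lower inside corners)
coincide with the ordinary powers:
if `s ∉ 𝔮_i` and `s * x ∈ 𝔮_i ^ e` then `x ∈ 𝔮_i ^ e`. -/
theorem symbolicPower_q_eq_power (m n : ℕ) (k : Type) [Field k] (Y : Set (ℕ × ℕ))
    (hY : StdLadder m n Y) (hconn : TConnected m n 2 Y)
    (r : ℕ) (hr : r = 1 ∨ ∃ b, IsLowerCorner Y (r, b))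
    (e : ℕ) (x s : LadderRing k 2 Y)
    (hs : s ∉ rowIdeal k Y r) (hsx : s * x ∈ rowIdeal k Y r ^ e) :
    x ∈ rowIdeal k Y r ^ e :=
  symbolicPower_q_eq_power_general m n k Y hY r e x s hs hsx

end LadderDet
end

section
/- Let Y be a 2-connected ladder and R = R_2(Y). For each i = 1,…,h+1 and every natural number e, the e-th symbolic power of the prime ideal 𝔮_i' equals its e-th ordinary power: (𝔮_i')^{(e)} = (𝔮_i')^e. Equivalently, for all x, s ∈ R with s ∉ 𝔮_i' and s·x ∈ (𝔮_i')^e, one has x ∈ (𝔮_i')^e. -/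
set_option maxHeartbeats 1000000
set_option synthInstance.maxHeartbeats 1000000

open CategoryTheory

namespace LadderDet

section SymbolicAux

open MvPolynomial

variable {k : Type} [Field k] {Y : Set (ℕ × ℕ)}

/-- Exponent-multiset map recording row and column multiplicities of a monomial. -/
noncomputable def Dmap (d : Y →₀ ℕ) : (ℕ ⊕ ℕ) →₀ ℕ :=
  d.sum fun y c => c • (Finsupp.single (Sum.inl y.1.1) 1 + Finsupp.single (Sum.inr y.1.2) 1)

@[simp] lemma Dmap_zero : Dmap (0 : Y →₀ ℕ) = 0 := Finsupp.sum_zero_index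

lemma Dmap_add (d e : Y →₀ ℕ) : Dmap (d + e) = Dmap d + Dmap e := by
  classical
  exact Finsupp.sum_add_index' (fun y => by simp) (fun y c1 c2 => by rw [add_smul])

lemma Dmap_single (y : Y) (n : ℕ) :
    Dmap (Finsupp.single y n)
      = n • (Finsupp.single (Sum.inl y.1.1) 1 + Finsupp.single (Sum.inr y.1.2) 1) := by
  classical
  exact Finsupp.sum_single_index (by simp)

lemma Dmap_apply_inl (d : Y →₀ ℕ) (i : ℕ) :
    Dmap d (Sum.inl i) = ∑ y ∈ d.support, (if y.1.1 = i then d y else 0) := by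
  classical
  rw [Dmap, Finsupp.sum_apply, Finsupp.sum]
  refine Finset.sum_congr rfl fun y hy => ?_
  simp [Finsupp.single_apply, mul_ite]

lemma Dmap_apply_inr (d : Y →₀ ℕ) (j : ℕ) :
    Dmap d (Sum.inr j) = ∑ y ∈ d.support, (if y.1.2 = j then d y else 0) := by
  classical
  rw [Dmap, Finsupp.sum_apply, Finsupp.sum]
  refine Finset.sum_congr rfl fun y hy => ?_
  simp [Finsupp.single_apply, mul_ite]

lemma Dmap_inl_ne_zero_iff (d : Y →₀ ℕ) (i : ℕ) :
    Dmap d (Sum.inl i) ≠ 0 ↔ ∃ y ∈ d.support, y.1.1 = i := by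
  classical
  rw [Dmap_apply_inl, Ne, Finset.sum_eq_zero_iff]
  constructor
  · intro h
    push_neg at h
    obtain ⟨y, hy, hne⟩ := h
    refine ⟨y, hy, ?_⟩
    by_contra hr
    simp [hr] at hne
  · rintro ⟨y, hy, rfl⟩ h
    have := h y hy
    simp at this
    exact Finsupp.mem_support_iff.mp hy this

lemma Dmap_inr_ne_zero_iff (d : Y →₀ ℕ) (j : ℕ) :
    Dmap d (Sum.inr j) ≠ 0 ↔ ∃ y ∈ d.support, y.1.2 = j := by
  classical
  rw [Dmap_apply_inr, Ne, Finset.sum_eq_zero_iff]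
  constructor
  · intro h
    push_neg at h
    obtain ⟨y, hy, hne⟩ := h
    refine ⟨y, hy, ?_⟩
    by_contra hr
    simp [hr] at hne
  · rintro ⟨y, hy, rfl⟩ h
    have := h y hy
    simp at this
    exact Finsupp.mem_support_iff.mp hy this

/-- The 2×2 exchange minor lies in the ideal `I₂(Y)`. -/
lemma minor_mem (k : Type) [Field k] {Y : Set (ℕ × ℕ)} {i p j j' : ℕ}
    (hip : i < p) (hjj : j < j')
    (h1 : (i,j) ∈ Y) (h2 : (i,j') ∈ Y) (h3 : (p,j) ∈ Y) (h4 : (p,j') ∈ Y) :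
    (X ⟨(i,j),h1⟩ * X ⟨(p,j'),h4⟩ - X ⟨(i,j'),h2⟩ * X ⟨(p,j),h3⟩ : MvPolynomial Y k)
      ∈ minorIdeal k 2 Y := by
  apply Ideal.subset_span
  have hmem : ∀ u v : Fin 2, ((![i,p] : Fin 2 → ℕ) u, (![j,j'] : Fin 2 → ℕ) v) ∈ Y := by
    intro u v
    fin_cases u <;> fin_cases v <;> simpa
  refine ⟨![i,p], ![j,j'], ?_, ?_, hmem, ?_⟩
  · intro a c hac
    fin_cases a <;> fin_cases c <;> simp_all <;> omega
  · intro a c hac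
    fin_cases a <;> fin_cases c <;> simp_all <;> omega
  · rw [minorPoly, Matrix.det_fin_two]
    simp [Matrix.of_apply]

/-- A decomposition of a finitely supported function at a supported point. -/
lemma finsupp_decomp {d : Y →₀ ℕ} {y : Y} (hy : y ∈ d.support) :
    d = Finsupp.single y 1 + (d - Finsupp.single y 1) := by
  classical
  have h1 : 1 ≤ d y := Nat.one_le_iff_ne_zero.mpr (Finsupp.mem_support_iff.mp hy)
  ext z
  simp only [Finsupp.add_apply, Finsupp.tsub_apply, Finsupp.single_apply]
  by_cases hz : y = z
  · subst hz; simp; omega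
  · simp [hz]

lemma sum_single_one_add (y : Y) (c : Y →₀ ℕ) :
    (Finsupp.single y 1 + c).sum (fun _ x => x) = 1 + c.sum (fun _ x => x) := by
  classical
  rw [Finsupp.sum_add_index' (fun _ => rfl) (fun _ a b => rfl), Finsupp.sum_single_index rfl]

lemma monomial_single_add_one (y : Y) (c : Y →₀ ℕ) :
    (monomial (Finsupp.single y 1 + c) (1:k)) = X y * monomial c 1 := by
  rw [X, monomial_mul, one_mul]

lemma sum_Dmap (d : Y →₀ ℕ) :
    (Dmap d).sum (fun _ x => x) = 2 * d.sum (fun _ x => x) := by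
  classical
  induction d using Finsupp.induction with
  | zero => simp
  | single_add y n f hyf hn ih =>
      rw [Dmap_add, Finsupp.sum_add_index' (fun _ => rfl) (fun _ a b => rfl),
        Finsupp.sum_add_index' (fun _ => rfl) (fun _ a b => rfl), ih, Dmap_single,
        Finsupp.sum_single_index rfl, smul_add, Finsupp.smul_single,
        Finsupp.sum_add_index' (fun _ => rfl) (fun _ a b => rfl), Finsupp.smul_single,
        Finsupp.sum_single_index rfl, Finsupp.sum_single_index rfl]
      simp; ring

lemma cf_common (N : ℕ)
    (IH : ∀ M, M < N → ∀ d d' : Y →₀ ℕ, d.sum (fun _ x => x) = M → Dmap d = Dmap d' →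
      Ideal.Quotient.mk (minorIdeal k 2 Y) (monomial d 1)
        = Ideal.Quotient.mk (minorIdeal k 2 Y) (monomial d' 1))
    (hN : 0 < N)
    (c c' : Y →₀ ℕ) (hdeg : c.sum (fun _ x => x) = N) (hD : Dmap c = Dmap c')
    (y : Y) (hy : y ∈ c.support) (hy' : y ∈ c'.support) :
    Ideal.Quotient.mk (minorIdeal k 2 Y) (monomial c 1)
      = Ideal.Quotient.mk (minorIdeal k 2 Y) (monomial c' 1) := by
  classical
  have hc : c = Finsupp.single y 1 + (c - Finsupp.single y 1) := finsupp_decomp hy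
  have hc' : c' = Finsupp.single y 1 + (c' - Finsupp.single y 1) := finsupp_decomp hy'
  have hD1 : Dmap (c - Finsupp.single y 1) = Dmap (c' - Finsupp.single y 1) := by
    have h := hD
    rw [hc, hc', Dmap_add, Dmap_add] at h
    exact add_left_cancel h
  have hdeg1 : (c - Finsupp.single y 1).sum (fun _ x => x) = N - 1 := by
    have h := hdeg
    rw [hc, sum_single_one_add] at h
    omega
  have hIH := IH (N-1) (by omega) _ _ hdeg1 hD1
  rw [hc, hc', monomial_single_add_one, monomial_single_add_one, map_mul, map_mul, hIH]

lemma exchange_step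
    (hlad : ∀ i j p q : ℕ, (i, j) ∈ Y → (p, q) ∈ Y → i ≤ p → j ≤ q → (i, q) ∈ Y ∧ (p, j) ∈ Y)
    (N : ℕ)
    (common : ∀ c c' : Y →₀ ℕ, c.sum (fun _ x => x) = N → Dmap c = Dmap c' →
      ∀ y : Y, y ∈ c.support → y ∈ c'.support →
      Ideal.Quotient.mk (minorIdeal k 2 Y) (monomial c 1)
        = Ideal.Quotient.mk (minorIdeal k 2 Y) (monomial c' 1))
    (d d' : Y →₀ ℕ) (hdeg : d.sum (fun _ x => x) = N) (hD : Dmap d = Dmap d')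
    (i j j' : ℕ) (hjj : j < j')
    (hmin : ∀ y ∈ d.support, i ≤ y.1.1)
    (hij : (i,j) ∈ Y) (hmem : (⟨(i,j),hij⟩ : Y) ∈ d.support)
    (hij' : (i,j') ∈ Y) (hmem' : (⟨(i,j'),hij'⟩ : Y) ∈ d'.support) :
    Ideal.Quotient.mk (minorIdeal k 2 Y) (monomial d 1)
      = Ideal.Quotient.mk (minorIdeal k 2 Y) (monomial d' 1) := by
  classical
  have hcol : Dmap d (Sum.inr j') ≠ 0 := by
    rw [hD, Dmap_inr_ne_zero_iff]; exact ⟨_, hmem', rfl⟩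
  obtain ⟨y₂, hy₂, hy₂col⟩ := (Dmap_inr_ne_zero_iff d j').mp hcol
  by_cases hpi : y₂.1.1 = i
  · have hyy : y₂ = ⟨(i,j'),hij'⟩ := Subtype.ext (Prod.ext hpi hy₂col)
    exact common d d' hdeg hD y₂ hy₂ (by rw [hyy]; exact hmem')
  · have hval : y₂.1 = (y₂.1.1, j') := Prod.ext rfl hy₂col
    set p := y₂.1.1 with hp
    have hip : i < p := lt_of_le_of_ne (hmin y₂ hy₂) (Ne.symm hpi)
    have hmemY : (p, j') ∈ Y := by rw [← hval]; exact y₂.2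
    obtain ⟨-, hpj⟩ := hlad i j p j' hij hmemY (le_of_lt hip) (le_of_lt hjj)
    set y1 : Y := ⟨(i,j), hij⟩ with hy1def
    have hy₂eq : y₂ = ⟨(p,j'), hmemY⟩ := Subtype.ext hval
    set z1 : Y := ⟨(i,j'), hij'⟩ with hz1def
    set z2 : Y := ⟨(p,j), hpj⟩ with hz2def
    have hy1y2 : y1 ≠ y₂ := by
      rw [hy₂eq, hy1def]
      intro h
      exact absurd (congrArg (fun t : Y => t.1.1) h) (by simpa using hip.ne)
    have h1 : 1 ≤ d y1 := Nat.one_le_iff_ne_zero.mpr (Finsupp.mem_support_iff.mp hmem)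
    have h2 : 1 ≤ d y₂ := Nat.one_le_iff_ne_zero.mpr (Finsupp.mem_support_iff.mp hy₂)
    set rest := d - Finsupp.single y1 1 - Finsupp.single y₂ 1 with hrest
    have hdcomp : d = Finsupp.single y1 1 + (Finsupp.single y₂ 1 + rest) := by
      ext z
      simp only [hrest, Finsupp.add_apply, Finsupp.tsub_apply, Finsupp.single_apply]
      by_cases e1 : y1 = z <;> by_cases e2 : y₂ = z
      · exact absurd (e1.trans e2.symm) hy1y2
      · subst e1; simp [e2]; omega
      · subst e2; simp [e1]; omega
      · simp [e1, e2]
    set d₂ := Finsupp.single z1 1 + (Finsupp.single z2 1 + rest) with hd₂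
    have hD2 : Dmap d₂ = Dmap d := by
      rw [hd₂]
      conv_rhs => rw [hdcomp]
      simp only [Dmap_add, Dmap_single, one_smul, hy₂eq, hz1def, hz2def, hy1def]
      abel
    have hdeg2 : d₂.sum (fun _ x => x) = N := by
      have hA : d.sum (fun _ x => x) = 1 + (1 + rest.sum (fun _ x => x)) := by
        conv_lhs => rw [hdcomp]
        rw [sum_single_one_add, sum_single_one_add]
      have hB : d₂.sum (fun _ x => x) = 1 + (1 + rest.sum (fun _ x => x)) := by
        rw [hd₂, sum_single_one_add, sum_single_one_add]
      omega
    have e1 : (monomial d (1:k)) = X y1 * (X y₂ * monomial rest 1) := by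
      conv_lhs => rw [hdcomp]
      rw [monomial_single_add_one, monomial_single_add_one]
    have e2 : (monomial d₂ (1:k)) = X z1 * (X z2 * monomial rest 1) := by
      rw [hd₂, monomial_single_add_one, monomial_single_add_one]
    have hstep1 : Ideal.Quotient.mk (minorIdeal k 2 Y) (monomial d 1)
        = Ideal.Quotient.mk (minorIdeal k 2 Y) (monomial d₂ 1) := by
      rw [Ideal.Quotient.eq]
      have hfact : (monomial d (1:k)) - monomial d₂ 1
          = (X y1 * X y₂ - X z1 * X z2) * monomial rest 1 := by
        rw [e1, e2, hy₂eq]; ring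
      rw [hfact]
      exact Ideal.mul_mem_right _ _
        (by rw [hy₂eq]; exact minor_mem k hip hjj hij hij' hpj hmemY)
    have hz1mem : z1 ∈ d₂.support := by
      rw [Finsupp.mem_support_iff, hd₂]
      simp [Finsupp.add_apply, Finsupp.single_apply]
    exact hstep1.trans (common d₂ d' hdeg2 (hD2.trans hD) z1 hz1mem hmem')

lemma cf (hlad : ∀ i j p q : ℕ, (i, j) ∈ Y → (p, q) ∈ Y → i ≤ p → j ≤ q →
      (i, q) ∈ Y ∧ (p, j) ∈ Y) :
    ∀ (N : ℕ) (d d' : Y →₀ ℕ), d.sum (fun _ x => x) = N → Dmap d = Dmap d' →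
      Ideal.Quotient.mk (minorIdeal k 2 Y) (monomial d 1)
        = Ideal.Quotient.mk (minorIdeal k 2 Y) (monomial d' 1) := by
  intro N
  induction N using Nat.strong_induction_on with
  | _ N IH =>
  intro d d' hdeg hD
  classical
  have hdeg' : d'.sum (fun _ x => x) = N := by
    have hA := sum_Dmap (d := d)
    have hB := sum_Dmap (d := d')
    rw [hD] at hA
    omega
  obtain rfl | hNpos := Nat.eq_zero_or_pos N
  · have hd0 : d = 0 := by
      ext y
      by_contra h
      have hy : y ∈ d.support := Finsupp.mem_support_iff.mpr h
      have := Finset.sum_eq_zero_iff.mp hdeg y hy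
      exact h this
    have hd0' : d' = 0 := by
      ext y
      by_contra h
      have hy : y ∈ d'.support := Finsupp.mem_support_iff.mpr h
      have := Finset.sum_eq_zero_iff.mp hdeg' y hy
      exact h this
    rw [hd0, hd0']
  · have common : ∀ c c' : Y →₀ ℕ, c.sum (fun _ x => x) = N → Dmap c = Dmap c' →
        ∀ y : Y, y ∈ c.support → y ∈ c'.support →
        Ideal.Quotient.mk (minorIdeal k 2 Y) (monomial c 1)
          = Ideal.Quotient.mk (minorIdeal k 2 Y) (monomial c' 1) :=
      fun c c' h1 h2 y hy hy' => cf_common N IH hNpos c c' h1 h2 y hy hy'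
    have hsupp : d.support.Nonempty := by
      rw [Finset.nonempty_iff_ne_empty]
      intro h
      rw [Finsupp.support_eq_empty.mp h] at hdeg
      simp at hdeg
      omega
    have hRne : (d.support.image (fun y : Y => y.1.1)).Nonempty := hsupp.image _
    set i := (d.support.image (fun y : Y => y.1.1)).min' hRne with hidef
    obtain ⟨yj, hyj, hyjrow⟩ := Finset.mem_image.mp (Finset.min'_mem _ hRne)
    have hmin : ∀ y ∈ d.support, i ≤ y.1.1 := fun y hy =>
      Finset.min'_le _ _ (Finset.mem_image_of_mem _ hy)
    have hrowsiff : ∀ r, (∃ y ∈ d.support, y.1.1 = r) ↔ (∃ y ∈ d'.support, y.1.1 = r) := by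
      intro r
      rw [← Dmap_inl_ne_zero_iff, ← Dmap_inl_ne_zero_iff, hD]
    obtain ⟨yj', hyj', hyjrow'⟩ := (hrowsiff i).mp ⟨yj, hyj, hyjrow⟩
    have hmin' : ∀ y ∈ d'.support, i ≤ y.1.1 := by
      intro y hy
      obtain ⟨z, hz, hzr⟩ := (hrowsiff y.1.1).mpr ⟨y, hy, rfl⟩
      calc i ≤ z.1.1 := hmin z hz
        _ = y.1.1 := hzr
    have hyjY : (i, yj.1.2) ∈ Y := by
      rw [show ((i : ℕ), yj.1.2) = yj.1 from (Prod.ext hyjrow.symm rfl)]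
      exact yj.2
    have hmemj : (⟨(i, yj.1.2), hyjY⟩ : Y) ∈ d.support := by
      rw [show (⟨(i, yj.1.2), hyjY⟩ : Y) = yj from Subtype.ext (Prod.ext hyjrow.symm rfl)]
      exact hyj
    have hyj'Y : (i, yj'.1.2) ∈ Y := by
      rw [show ((i : ℕ), yj'.1.2) = yj'.1 from (Prod.ext hyjrow'.symm rfl)]
      exact yj'.2
    have hmemj' : (⟨(i, yj'.1.2), hyj'Y⟩ : Y) ∈ d'.support := by
      rw [show (⟨(i, yj'.1.2), hyj'Y⟩ : Y) = yj' from Subtype.ext (Prod.ext hyjrow'.symm rfl)]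
      exact hyj'
    rcases lt_trichotomy yj.1.2 yj'.1.2 with h | h | h
    · exact exchange_step hlad N common d d' hdeg hD i yj.1.2 yj'.1.2 h hmin
        hyjY hmemj hyj'Y hmemj'
    · refine common d d' hdeg hD ⟨(i, yj.1.2), hyjY⟩ hmemj ?_
      rw [show (⟨(i, yj.1.2), hyjY⟩ : Y) = ⟨(i, yj'.1.2), hyj'Y⟩ from
        Subtype.ext (Prod.ext rfl h)]
      exact hmemj'
    · exact (exchange_step hlad N common d' d hdeg' hD.symm i yj'.1.2 yj.1.2 h hmin'
        hyj'Y hmemj' hyjY hmemj).symm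


/-- The toric parametrization `X_{ij} ↦ u_i v_j`. -/
noncomputable def phi : MvPolynomial Y k →ₐ[k] MvPolynomial (ℕ ⊕ ℕ) k :=
  aeval fun y : Y => X (Sum.inl y.1.1) * X (Sum.inr y.1.2)

lemma phi_monomial (d : Y →₀ ℕ) (c : k) :
    phi (monomial d c) = monomial (Dmap d) c := by
  classical
  induction d using Finsupp.induction with
  | zero => simp [phi, aeval_monomial, monomial_zero', algebraMap_eq]
  | single_add y n f hyf hn ih =>
      have h1 : (monomial (Finsupp.single y n + f) c : MvPolynomial Y k)
          = monomial (Finsupp.single y n) 1 * monomial f c := by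
        rw [monomial_mul, one_mul]
      rw [h1, map_mul, ih, Dmap_add]
      have h2 : phi (monomial (Finsupp.single y n) (1 : k))
          = monomial (Dmap (Finsupp.single y n)) (1 : k) := by
        rw [phi, aeval_monomial, Finsupp.prod_single_index (by simp), Dmap_single]
        rw [mul_pow, map_one, one_mul, smul_add]
        rw [X_pow_eq_monomial, X_pow_eq_monomial, monomial_mul, one_mul]
        simp [Finsupp.smul_single]
      rw [h2, monomial_mul, one_mul]

lemma coeff_phi (f : MvPolynomial Y k) (E : (ℕ ⊕ ℕ) →₀ ℕ) :
    coeff E (phi f) = ∑ d ∈ f.support, (if Dmap d = E then coeff d f else 0) := by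
  classical
  conv_lhs => rw [f.as_sum]
  rw [map_sum, coeff_sum]
  exact Finset.sum_congr rfl fun d _ => by rw [phi_monomial, coeff_monomial]

lemma phi_minorIdeal {f : MvPolynomial Y k} (hf : f ∈ minorIdeal k 2 Y) : phi f = 0 := by
  have hle : minorIdeal k 2 Y ≤ RingHom.ker (phi (k := k) (Y := Y)).toRingHom := by
    rw [minorIdeal, Ideal.span_le]
    rintro g ⟨r, c, hr, hc, h, rfl⟩
    simp only [SetLike.mem_coe, RingHom.mem_ker]
    show phi (minorPoly k r c h) = 0
    rw [minorPoly, Matrix.det_fin_two]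
    simp only [Matrix.of_apply, map_sub, map_mul]
    simp only [phi, aeval_X]
    ring
  exact hle hf

lemma phi_ker
    (hlad : ∀ i j p q : ℕ, (i, j) ∈ Y → (p, q) ∈ Y → i ≤ p → j ≤ q →
      (i, q) ∈ Y ∧ (p, j) ∈ Y)
    (f : MvPolynomial Y k) (hf : phi f = 0) : f ∈ minorIdeal k 2 Y := by
  classical
  rw [← Ideal.Quotient.eq_zero_iff_mem]
  have h1 : (Ideal.Quotient.mk (minorIdeal k 2 Y)) f
      = ∑ d ∈ f.support, (Ideal.Quotient.mk (minorIdeal k 2 Y)) (C (coeff d f))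
          * (Ideal.Quotient.mk (minorIdeal k 2 Y)) (monomial d 1) := by
    conv_lhs => rw [f.as_sum]
    rw [map_sum]
    refine Finset.sum_congr rfl fun d _ => ?_
    rw [← map_mul, C_mul_monomial, mul_one]
  rw [h1, ← Finset.sum_fiberwise_of_maps_to
    (g := Dmap) (t := f.support.image Dmap) (fun d hd => Finset.mem_image_of_mem _ hd)]
  refine Finset.sum_eq_zero fun E hE => ?_
  obtain ⟨d₀, hd₀, hd₀E⟩ := Finset.mem_image.mp hE
  have hconst : ∀ d ∈ f.support.filter (fun d => Dmap d = E),
      (Ideal.Quotient.mk (minorIdeal k 2 Y)) (monomial d 1)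
        = (Ideal.Quotient.mk (minorIdeal k 2 Y)) (monomial d₀ 1) := by
    intro d hd
    exact cf hlad (d.sum fun _ x => x) d d₀ rfl
      ((Finset.mem_filter.mp hd).2.trans hd₀E.symm)
  calc (∑ d ∈ f.support.filter (fun d => Dmap d = E),
        (Ideal.Quotient.mk (minorIdeal k 2 Y)) (C (coeff d f))
          * (Ideal.Quotient.mk (minorIdeal k 2 Y)) (monomial d 1))
      = (∑ d ∈ f.support.filter (fun d => Dmap d = E),
          (Ideal.Quotient.mk (minorIdeal k 2 Y)) (C (coeff d f)))
          * (Ideal.Quotient.mk (minorIdeal k 2 Y)) (monomial d₀ 1) := by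
        rw [Finset.sum_mul]
        exact Finset.sum_congr rfl fun d hd => by rw [hconst d hd]
    _ = 0 := by
        rw [← map_sum, ← map_sum, Finset.sum_filter]
        have : (∑ d ∈ f.support, if Dmap d = E then coeff d f else 0) = 0 := by
          rw [← coeff_phi, hf, coeff_zero]
        rw [this, map_zero, map_zero, zero_mul]


/-- The ideal of polynomials all of whose monomials contain at least `e`
variables from column `b`. -/
noncomputable def highSet (b e : ℕ) : Ideal (MvPolynomial Y k) where
  carrier := {f | ∀ d ∈ f.support, e ≤ Dmap d (Sum.inr b)}
  zero_mem' := by simp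
  add_mem' := by
    classical
    intro f g hf hg d hd
    rcases Finset.mem_union.mp (MvPolynomial.support_add hd) with h | h
    · exact hf d h
    · exact hg d h
  smul_mem' := by
    classical
    intro c f hf d hd
    have := MvPolynomial.support_mul c f hd
    obtain ⟨u, hu, v, hv, rfl⟩ := Finset.mem_add.mp this
    have h2 : Dmap (u + v) (Sum.inr b) = Dmap u (Sum.inr b) + Dmap v (Sum.inr b) := by
      rw [Dmap_add, Finsupp.add_apply]
    have := hf v hv
    omega

/-- The lift of `𝔮'_b` to the polynomial ring. -/
noncomputable def colQ (k : Type) [Field k] (Y : Set (ℕ × ℕ)) (b : ℕ) :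
    Ideal (MvPolynomial Y k) :=
  Ideal.span {g | ∃ y : Y, y.1.2 = b ∧ g = X y}

lemma colQ_le_highSet : colQ k Y b ≤ highSet b 1 := by
  classical
  rw [colQ, Ideal.span_le]
  rintro g ⟨y, hyb, rfl⟩
  intro d hd
  rw [MvPolynomial.support_X, Finset.mem_singleton] at hd
  subst hd
  rw [Dmap_single, Finsupp.smul_apply, Finsupp.add_apply, Finsupp.single_apply,
    Finsupp.single_apply, hyb]
  simp

lemma highSet_mul {b a c : ℕ} {f g : MvPolynomial Y k}
    (hf : f ∈ highSet b a) (hg : g ∈ highSet b c) :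
    f * g ∈ highSet b (a + c) := by
  classical
  intro d hd
  obtain ⟨u, hu, v, hv, rfl⟩ := Finset.mem_add.mp (MvPolynomial.support_mul f g hd)
  have h2 : Dmap (u + v) (Sum.inr b) = Dmap u (Sum.inr b) + Dmap v (Sum.inr b) := by
    rw [Dmap_add, Finsupp.add_apply]
  have := hf u hu
  have := hg v hv
  omega

lemma colQ_pow_le_highSet (e : ℕ) : colQ k Y b ^ e ≤ highSet b e := by
  induction e with
  | zero => intro f _ d _; exact Nat.zero_le _
  | succ e ih =>
      rw [pow_succ]
      refine Ideal.mul_le.mpr fun r hr s hs => ?_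
      exact highSet_mul (ih hr) (colQ_le_highSet hs)

lemma monomial_mem_colQ_pow {e : ℕ} {d : Y →₀ ℕ} (c : k)
    (hd : e ≤ Dmap d (Sum.inr b)) : monomial d c ∈ colQ k Y b ^ e := by
  classical
  induction e generalizing d with
  | zero => rw [pow_zero, Ideal.one_eq_top]; exact Submodule.mem_top
  | succ e ih =>
      have hne : Dmap d (Sum.inr b) ≠ 0 := by omega
      obtain ⟨y, hy, hyb⟩ := (Dmap_inr_ne_zero_iff d b).mp hne
      have hdec : d = Finsupp.single y 1 + (d - Finsupp.single y 1) := finsupp_decomp hy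
      have hsingle : Dmap (Finsupp.single y 1) (Sum.inr b) = 1 := by
        rw [Dmap_single, Finsupp.smul_apply, Finsupp.add_apply, Finsupp.single_apply,
          Finsupp.single_apply, hyb]
        simp
      have hrest : e ≤ Dmap (d - Finsupp.single y 1) (Sum.inr b) := by
        have : Dmap d (Sum.inr b)
            = Dmap (Finsupp.single y 1) (Sum.inr b)
              + Dmap (d - Finsupp.single y 1) (Sum.inr b) := by
          conv_lhs => rw [hdec]
          rw [Dmap_add, Finsupp.add_apply]
        omega
      have hmono : (monomial d c : MvPolynomial Y k)
          = X y * monomial (d - Finsupp.single y 1) c := by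
        conv_lhs => rw [hdec]
        rw [X, monomial_mul, one_mul]
      rw [hmono, pow_succ']
      exact Ideal.mul_mem_mul (Ideal.subset_span ⟨y, hyb, rfl⟩) (ih hrest)

/-- Sum of the monomials of `f` with fewer than `e` column-`b` variables. -/
noncomputable def lowCut (b e : ℕ) (f : MvPolynomial Y k) : MvPolynomial Y k := by
  classical
  exact ∑ d ∈ f.support.filter (fun d => Dmap d (Sum.inr b) < e), monomial d (coeff d f)

/-- Sum of the monomials of `f` with at least `e` column-`b` variables. -/
noncomputable def highCut (b e : ℕ) (f : MvPolynomial Y k) : MvPolynomial Y k := by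
  classical
  exact ∑ d ∈ f.support.filter (fun d => ¬ Dmap d (Sum.inr b) < e), monomial d (coeff d f)

lemma lowCut_add_highCut (b e : ℕ) (f : MvPolynomial Y k) :
    f = lowCut b e f + highCut b e f := by
  classical
  rw [lowCut, highCut]
  conv_lhs => rw [f.as_sum]
  rw [Finset.sum_filter_add_sum_filter_not]

lemma highCut_mem (b e : ℕ) (f : MvPolynomial Y k) :
    highCut b e f ∈ colQ k Y b ^ e := by
  classical
  rw [highCut]
  refine Ideal.sum_mem _ fun d hd => monomial_mem_colQ_pow _ ?_
  have := (Finset.mem_filter.mp hd).2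
  omega

lemma X_pow_dvd_of_highSet {b e : ℕ} {f : MvPolynomial Y k}
    (hf : f ∈ highSet b e) :
    (X (Sum.inr b) : MvPolynomial (ℕ ⊕ ℕ) k) ^ e ∣ phi f := by
  classical
  conv_rhs => rw [f.as_sum]
  rw [map_sum]
  refine Finset.dvd_sum fun d hd => ?_
  rw [phi_monomial]
  refine ⟨monomial (Dmap d - Finsupp.single (Sum.inr b) e) (coeff d f), ?_⟩
  rw [X_pow_eq_monomial, monomial_mul, one_mul]
  have he := hf d hd
  have harg : Finsupp.single (Sum.inr b) e + (Dmap d - Finsupp.single (Sum.inr b) e)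
      = Dmap d := by
    ext z
    rw [Finsupp.add_apply, Finsupp.tsub_apply, Finsupp.single_apply]
    rcases eq_or_ne (Sum.inr b) z with rfl | hz
    · rw [if_pos rfl]; omega
    · rw [if_neg hz]; omega
  rw [harg]

lemma support_lt_of_low (e : ℕ) (f : MvPolynomial Y k)
    {E : (ℕ ⊕ ℕ) →₀ ℕ} (hE : E ∈ (phi (lowCut b e f)).support) :
    E (Sum.inr b) < e := by
  classical
  have hco := MvPolynomial.mem_support_iff.mp hE
  rw [lowCut, map_sum, MvPolynomial.coeff_sum] at hco
  obtain ⟨d, hd, hne⟩ := Finset.exists_ne_zero_of_sum_ne_zero hco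
  rw [phi_monomial, coeff_monomial] at hne
  have hDd : Dmap d = E := by
    by_contra h
    simp [h] at hne
  rw [← hDd]
  exact (Finset.mem_filter.mp hd).2

lemma support_ge_of_dvd {e : ℕ} {P : MvPolynomial (ℕ ⊕ ℕ) k}
    (h : (X (Sum.inr b) : MvPolynomial (ℕ ⊕ ℕ) k) ^ e ∣ P)
    {E : (ℕ ⊕ ℕ) →₀ ℕ} (hE : E ∈ P.support) : e ≤ E (Sum.inr b) := by
  classical
  obtain ⟨P', rfl⟩ := h
  rw [X_pow_eq_monomial] at hE
  obtain ⟨u, hu, v, hv, rfl⟩ := Finset.mem_add.mp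
    (MvPolynomial.support_mul _ _ hE)
  rw [MvPolynomial.support_monomial, if_neg (one_ne_zero)] at hu
  rw [Finset.mem_singleton] at hu
  subst hu
  rw [Finsupp.add_apply, Finsupp.single_apply]
  simp

lemma phi_lowCut_eq_zero {e : ℕ} {f : MvPolynomial Y k}
    (h : (X (Sum.inr b) : MvPolynomial (ℕ ⊕ ℕ) k) ^ e ∣ phi (lowCut b e f)) :
    phi (lowCut b e f) = 0 := by
  classical
  by_contra hne
  have hsupp : (phi (lowCut b e f)).support.Nonempty := by
    rw [Finset.nonempty_iff_ne_empty]
    intro h0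
    exact hne (MvPolynomial.support_eq_empty.mp h0)
  obtain ⟨E, hE⟩ := hsupp
  have h1 := support_lt_of_low (b := b) e f hE
  have h2 := support_ge_of_dvd (b := b) h hE
  omega

/-- Removing a point from a type. -/
def eOpt (x : ℕ ⊕ ℕ) : (ℕ ⊕ ℕ) ≃ Option {y : ℕ ⊕ ℕ // y ≠ x} where
  toFun y := if h : y = x then none else some ⟨y, h⟩
  invFun o := o.elim x Subtype.val
  left_inv y := by by_cases h : y = x <;> simp [h]
  right_inv o := by
    cases o with
    | none => exact dif_pos rfl
    | some z => simp [dif_neg z.2]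

lemma prime_X_inr (b : ℕ) : Prime (X (Sum.inr b) : MvPolynomial (ℕ ⊕ ℕ) k) := by
  classical
  set ψ := (renameEquiv k (eOpt (Sum.inr b))).trans
    (optionEquivLeft k {y : ℕ ⊕ ℕ // y ≠ Sum.inr b})
  rw [← MulEquiv.prime_iff ψ.toMulEquiv]
  have hψ : ψ (X (Sum.inr b)) = Polynomial.X := by
    show (optionEquivLeft k _) ((renameEquiv k (eOpt (Sum.inr b))) (X (Sum.inr b)))
      = Polynomial.X
    rw [renameEquiv_apply, rename_X]
    rw [show eOpt (Sum.inr b) (Sum.inr b) = none from by simp [eOpt]]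
    exact optionEquivLeft_X_none k _
  show Prime (ψ (X (Sum.inr b)))
  rw [hψ]
  exact Polynomial.prime_X

end SymbolicAux

open MvPolynomial in

/-- In `R = R_2(Y)` for a `2`-connected ladder `Y`, the symbolic powers
of the height-one primes `𝔮_i'` (generated by the residues of the variables in column
`b_i`, where `b_1, …, b_h` are the columns of the lower inside corners and `b_{h+1} = 1`)
coincide with the ordinary powers:
if `s ∉ 𝔮_i'` and `s * x ∈ (𝔮_i') ^ e` then `x ∈ (𝔮_i') ^ e`. -/
theorem symbolicPower_q'_eq_power (m n : ℕ) (k : Type) [Field k] (Y : Set (ℕ × ℕ))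
    (hY : StdLadder m n Y) (hconn : TConnected m n 2 Y)
    (b : ℕ) (hb : b = 1 ∨ ∃ a, IsLowerCorner Y (a, b))
    (e : ℕ) (x s : LadderRing k 2 Y)
    (hs : s ∉ colIdeal k Y b) (hsx : s * x ∈ colIdeal k Y b ^ e) :
    x ∈ colIdeal k Y b ^ e := by
  classical
  have hlad := hY.1.2
  obtain ⟨fs, rfl⟩ := Ideal.Quotient.mk_surjective s
  obtain ⟨fx, rfl⟩ := Ideal.Quotient.mk_surjective x
  have hmap : colIdeal k Y b
      = (colQ k Y b).map (Ideal.Quotient.mk (minorIdeal k 2 Y)) := by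
    rw [colIdeal, colQ, Ideal.map_span]
    congr 1
    ext z
    simp only [Set.mem_setOf_eq, Set.mem_image]
    constructor
    · rintro ⟨p, h, rfl⟩
      exact ⟨X ⟨(p,b), h⟩, ⟨⟨(p,b), h⟩, rfl, rfl⟩, rfl⟩
    · rintro ⟨g, ⟨y, hyb, rfl⟩, rfl⟩
      have hY' : (y.1.1, b) ∈ Y := by
        rw [show ((y.1.1 : ℕ), b) = y.1 from Prod.ext rfl hyb.symm]
        exact y.2
      refine ⟨y.1.1, hY', ?_⟩
      show Ideal.Quotient.mk (minorIdeal k 2 Y) (X y)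
          = Ideal.Quotient.mk (minorIdeal k 2 Y) (X ⟨(y.1.1, b), hY'⟩)
      rw [show (⟨(y.1.1, b), hY'⟩ : Y) = y from Subtype.ext (Prod.ext rfl hyb.symm)]
  rw [hmap, ← Ideal.map_pow] at hsx ⊢
  rw [← map_mul] at hsx
  obtain ⟨g, hgQ, hgeq⟩ :=
    (Ideal.mem_map_iff_of_surjective _ Ideal.Quotient.mk_surjective).mp hsx
  have hsub : g - fs * fx ∈ minorIdeal k 2 Y := Ideal.Quotient.eq.mp hgeq
  have hPW : phi fs * phi fx = phi g := by
    have h0 : phi (g - fs * fx) = 0 := phi_minorIdeal hsub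
    rw [map_sub, map_mul, sub_eq_zero] at h0
    exact h0.symm
  have hnd : ¬ ((X (Sum.inr b) : MvPolynomial (ℕ ⊕ ℕ) k) ∣ phi fs) := by
    intro hdvd
    have hhq : highCut b 1 fs ∈ colQ k Y b := by
      simpa [pow_one] using highCut_mem b 1 fs
    have hd1 : (X (Sum.inr b) : MvPolynomial (ℕ ⊕ ℕ) k) ^ 1 ∣ phi (lowCut b 1 fs) := by
      have hsplit : phi (lowCut b 1 fs) = phi fs - phi (highCut b 1 fs) := by
        rw [eq_sub_iff_add_eq, ← map_add, ← lowCut_add_highCut]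
      rw [pow_one, hsplit]
      refine dvd_sub hdvd ?_
      simpa [pow_one] using
        X_pow_dvd_of_highSet (colQ_pow_le_highSet 1 (by simpa [pow_one] using hhq))
    have hlI : lowCut b 1 fs ∈ minorIdeal k 2 Y :=
      phi_ker hlad _ (phi_lowCut_eq_zero hd1)
    apply hs
    rw [hmap]
    have heq : Ideal.Quotient.mk (minorIdeal k 2 Y) fs
        = Ideal.Quotient.mk (minorIdeal k 2 Y) (highCut b 1 fs) := by
      conv_lhs => rw [lowCut_add_highCut b 1 fs]
      rw [map_add, Ideal.Quotient.eq_zero_iff_mem.mpr hlI, zero_add]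
    rw [heq]
    exact Ideal.mem_map_of_mem _ hhq
  have hgdvd : (X (Sum.inr b) : MvPolynomial (ℕ ⊕ ℕ) k) ^ e ∣ phi g :=
    X_pow_dvd_of_highSet (colQ_pow_le_highSet e hgQ)
  have hhx : (X (Sum.inr b) : MvPolynomial (ℕ ⊕ ℕ) k) ^ e ∣ phi (highCut b e fx) :=
    X_pow_dvd_of_highSet (colQ_pow_le_highSet e (highCut_mem b e fx))
  have hlowdvd : (X (Sum.inr b) : MvPolynomial (ℕ ⊕ ℕ) k) ^ e
      ∣ phi fs * phi (lowCut b e fx) := by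
    have hx : phi fx = phi (lowCut b e fx) + phi (highCut b e fx) := by
      rw [← map_add, ← lowCut_add_highCut]
    have hmain : phi fs * phi (lowCut b e fx)
        = phi g - phi fs * phi (highCut b e fx) := by
      rw [← hPW, hx]; ring
    rw [hmain]
    exact dvd_sub hgdvd (Dvd.dvd.mul_left hhx _)
  have hLdvd := (prime_X_inr (k := k) b).pow_dvd_of_dvd_mul_left e hnd hlowdvd
  have hlI := phi_ker hlad _ (phi_lowCut_eq_zero hLdvd)
  have hxeq : Ideal.Quotient.mk (minorIdeal k 2 Y) fx
      = Ideal.Quotient.mk (minorIdeal k 2 Y) (highCut b e fx) := by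
    conv_lhs => rw [lowCut_add_highCut b e fx]
    rw [map_add, Ideal.Quotient.eq_zero_iff_mem.mpr hlI, zero_add]
  rw [hxeq]
  exact Ideal.mem_map_of_mem _ (highCut_mem b e fx)


end LadderDet
end

section
/- Let Y be a 2-connected ladder and R = R_2(Y). For each j = 1,…,k and every natural number e, the e-th symbolic power of the prime ideal 𝔭_j equals its e-th ordinary power: 𝔭_j^{(e)} = 𝔭_j^e. Equivalently, for all x, s ∈ R with s ∉ 𝔭_j and s·x ∈ 𝔭_j^e, one has x ∈ 𝔭_j^e. -/
set_option maxHeartbeats 1000000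
set_option synthInstance.maxHeartbeats 1000000

open CategoryTheory

namespace LadderDet

section Proof

open MvPolynomial

variable {m n : ℕ} {k : Type} [Field k] {Y : Set (ℕ × ℕ)} {c d : ℕ}


/-- corners of a NW-SE pair lie in the ladder -/
lemma ladder_corners (hL : IsLadder m n Y) {a b α β : ℕ} (h1 : (a, b) ∈ Y)
    (h2 : (α, β) ∈ Y) (hr : a ≤ α) (hc : b ≤ β) : (a, β) ∈ Y ∧ (α, b) ∈ Y :=
  hL.2 a b α β h1 h2 hr hc

/-- no point of the ladder lies strictly SE of the upper inside corner -/
lemma no_SE (hL : IsLadder m n Y) (hcd : IsUpperCorner Y (c, d)) {p q : ℕ}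
    (hpq : (p, q) ∈ Y) : p ≤ c ∨ q ≤ d := by
  by_contra hcon
  push_neg at hcon
  obtain ⟨hp, hq⟩ := hcon
  obtain ⟨_, h10, h01, h11⟩ := hcd
  simp only at h10 h01 h11
  have s1 := hL.2 (c+1) d p q h10 hpq (by omega) (by omega)
  have s2 := hL.2 c (d+1) (c+1) q h01 s1.1 (by omega) (by omega)
  exact h11 s2.2

/-- the explicit 2×2 binomial is in the minor ideal -/
lemma binomial_mem_minorIdeal {a b α β : ℕ} (h1 : (a, b) ∈ Y) (h2 : (a, β) ∈ Y)
    (h3 : (α, b) ∈ Y) (h4 : (α, β) ∈ Y) (hr : a < α) (hc : b < β) :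
    (X ⟨(a, b), h1⟩ * X ⟨(α, β), h4⟩ - X ⟨(a, β), h2⟩ * X ⟨(α, b), h3⟩ :
      MvPolynomial Y k) ∈ minorIdeal k 2 Y := by
  apply Ideal.subset_span
  refine ⟨![a, α], ![b, β], ?_, ?_, ?_, ?_⟩
  · intro i j hij
    fin_cases i <;> fin_cases j <;> simp_all <;> omega
  · intro i j hij
    fin_cases i <;> fin_cases j <;> simp_all <;> omega
  · intro u v
    fin_cases u <;> fin_cases v <;> simpa
  · rw [minorPoly, Matrix.det_fin_two]
    simp only [Matrix.of_apply]
    congr 1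

/-- weight of a variable: 1 if weakly NW of the corner, else 0 -/
def wt (c d : ℕ) (y : Y) : ℕ := if y.1.1 ≤ c ∧ y.1.2 ≤ d then 1 else 0

/-- weighted degree of an exponent vector -/
def Dw (c d : ℕ) (dd : Y →₀ ℕ) : ℕ := dd.sum fun y nn => nn * wt c d y

lemma Dw_add (dd ee : Y →₀ ℕ) : Dw c d (dd + ee) = Dw c d dd + Dw c d ee :=
  Finsupp.sum_add_index' (fun _ => zero_mul _) (fun _ _ _ => add_mul _ _ _)

lemma Dw_single (y : Y) (nn : ℕ) : Dw c d (Finsupp.single y nn) = nn * wt c d y :=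
  Finsupp.sum_single_index (zero_mul _)

/-- the ideal of NW variables in the polynomial ring -/
noncomputable def Pid (k : Type) [Field k] (Y : Set (ℕ × ℕ)) (c d : ℕ) :
    Ideal (MvPolynomial Y k) :=
  Ideal.span ((fun y => (X y : MvPolynomial Y k)) '' {y : Y | y.1.1 ≤ c ∧ y.1.2 ≤ d})

lemma X_mem_Pid {y : Y} (hy : wt c d y = 1) : (X y : MvPolynomial Y k) ∈ Pid k Y c d := by
  apply Ideal.subset_span
  refine ⟨y, ?_, rfl⟩
  unfold wt at hy
  split at hy
  · assumption
  · exact absurd hy (by norm_num)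

lemma Finsupp.eq_single_add {dd : Y →₀ ℕ} {y : Y} (h : dd y ≠ 0) :
    dd = Finsupp.single y 1 + (dd - Finsupp.single y 1) := by
  ext z
  simp only [Finsupp.add_apply, Finsupp.tsub_apply, Finsupp.single_apply]
  split_ifs with hz
  · subst hz; omega
  · omega

/-- a monomial is in the `Dw`-th power of `Pid` -/
lemma monomial_mem_Pid_pow (dd : Y →₀ ℕ) (a : k) :
    monomial dd a ∈ Pid k Y c d ^ Dw c d dd := by
  generalize hN : Dw c d dd = N
  induction N generalizing dd with
  | zero => simp [Ideal.one_eq_top]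
  | succ N ih =>
    have hex : ∃ y ∈ dd.support, dd y * wt c d y ≠ 0 := by
      by_contra hall
      push_neg at hall
      have : Dw c d dd = 0 := Finset.sum_eq_zero (by
        intro y hy; have := hall y hy; simpa using this)
      omega
    obtain ⟨y, hy, hyne⟩ := hex
    have hdy : dd y ≠ 0 := fun h => hyne (by simp [h])
    have hwy : wt c d y = 1 := by
      unfold wt at hyne ⊢; split_ifs with h
      · rfl
      · simp [wt, h] at hyne
    have hdec := Finsupp.eq_single_add hdy
    set dd' := dd - Finsupp.single y 1 with hdd'
    have hDw : Dw c d dd' = N := by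
      have := Dw_add (c := c) (d := d) (Finsupp.single y 1) dd'
      rw [← hdec] at this
      rw [Dw_single, hwy] at this
      omega
    have hmono : monomial dd a = X y * monomial dd' a := by
      rw [X, monomial_mul, ← hdec, one_mul]
    rw [hmono, pow_succ, mul_comm (Pid k Y c d ^ N) (Pid k Y c d)]
    exact Ideal.mul_mem_mul (X_mem_Pid hwy) (ih dd' hDw)

/-- the grading homomorphism into `S[T]` -/
noncomputable def Th (k : Type) [Field k] (Y : Set (ℕ × ℕ)) (c d : ℕ) :
    MvPolynomial Y k →ₐ[k] Polynomial (MvPolynomial Y k) :=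
  aeval fun y => Polynomial.C (X y) * Polynomial.X ^ wt c d y

lemma Th_X (y : Y) : Th k Y c d (X y) = Polynomial.C (X y) * Polynomial.X ^ wt c d y := by
  simp [Th]

lemma Th_monomial (dd : Y →₀ ℕ) (a : k) :
    Th k Y c d (monomial dd a) = Polynomial.C (monomial dd a) * Polynomial.X ^ Dw c d dd := by
  induction dd using Finsupp.induction generalizing a with
  | zero => simp [Dw, Th, aeval_monomial, algebraMap_eq, Polynomial.algebraMap_apply]
  | single_add y nn f hyf hnn ih =>
    have h1 : monomial (Finsupp.single y nn + f) a
        = X y ^ nn * monomial f a := by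
      rw [X_pow_eq_monomial, monomial_mul, one_mul]
    rw [h1, map_mul, map_pow, Th_X, ih, Dw_add, Dw_single]
    rw [mul_pow, ← Polynomial.C_pow, ← pow_mul, map_mul, mul_comm (wt c d y) nn]
    ring

lemma eval_one_Th (f : MvPolynomial Y k) : Polynomial.eval 1 (Th k Y c d f) = f := by
  conv_lhs => rw [f.as_sum]
  rw [map_sum, Polynomial.eval_finset_sum]
  conv_rhs => rw [f.as_sum]
  refine Finset.sum_congr rfl fun dd _ => ?_
  rw [Th_monomial]
  simp

/-- weights of the four corners of a minor balance -/
lemma wt_minor_balance (hL : IsLadder m n Y) (hcd : IsUpperCorner Y (c, d))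
    {a b α β : ℕ} (h1 : (a, b) ∈ Y) (h2 : (a, β) ∈ Y) (h3 : (α, b) ∈ Y)
    (h4 : (α, β) ∈ Y) (hr : a < α) (hc : b < β) :
    wt c d (⟨(a, b), h1⟩ : Y) + wt c d (⟨(α, β), h4⟩ : Y)
      = wt c d (⟨(a, β), h2⟩ : Y) + wt c d (⟨(α, b), h3⟩ : Y) := by
  have hse := no_SE hL hcd h4
  unfold wt
  rcases hse with hα | hβ
  · have ha : a ≤ c := by omega
    simp only [hα, ha, true_and]
    try split_ifs <;> omega
  · have hb : b ≤ d := by omega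
    simp only [hβ, hb, and_true]
    try split_ifs <;> omega

/-- `Th` maps the minor ideal into polynomials with coefficients in the minor ideal -/
lemma Th_mem_map_C (hL : IsLadder m n Y) (hcd : IsUpperCorner Y (c, d))
    {f : MvPolynomial Y k} (hf : f ∈ minorIdeal k 2 Y) :
    Th k Y c d f ∈ (minorIdeal k 2 Y).map (Polynomial.C :
      MvPolynomial Y k →+* Polynomial (MvPolynomial Y k)) := by
  have hmap : Ideal.map (Th k Y c d).toRingHom (minorIdeal k 2 Y)
      ≤ (minorIdeal k 2 Y).map Polynomial.C := by
    rw [minorIdeal, Ideal.map_span, Ideal.span_le]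
    rintro - ⟨-, ⟨r, cc, hrm, hcm, hYm, rfl⟩, rfl⟩
    have e0 : r 0 < r 1 := hrm (by norm_num : (0 : Fin 2) < 1)
    have e1 : cc 0 < cc 1 := hcm (by norm_num : (0 : Fin 2) < 1)
    have hdet : minorPoly k r cc hYm =
        X ⟨(r 0, cc 0), hYm 0 0⟩ * X ⟨(r 1, cc 1), hYm 1 1⟩
          - X ⟨(r 0, cc 1), hYm 0 1⟩ * X ⟨(r 1, cc 0), hYm 1 0⟩ := by
      rw [minorPoly, Matrix.det_fin_two]; simp only [Matrix.of_apply]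
    have hbal := wt_minor_balance hL hcd (hYm 0 0) (hYm 0 1) (hYm 1 0)
      (hYm 1 1) e0 e1
    simp only [AlgHom.toRingHom_eq_coe, RingHom.coe_coe]
    rw [hdet, map_sub, map_mul, map_mul, Th_X, Th_X, Th_X, Th_X]
    have : Polynomial.C (X (⟨(r 0, cc 0), hYm 0 0⟩ : Y) : MvPolynomial Y k) * Polynomial.X ^ wt c d ⟨(r 0, cc 0), hYm 0 0⟩ *
          (Polynomial.C (X ⟨(r 1, cc 1), hYm 1 1⟩) * Polynomial.X ^ wt c d ⟨(r 1, cc 1), hYm 1 1⟩) -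
        Polynomial.C (X ⟨(r 0, cc 1), hYm 0 1⟩) * Polynomial.X ^ wt c d ⟨(r 0, cc 1), hYm 0 1⟩ *
          (Polynomial.C (X ⟨(r 1, cc 0), hYm 1 0⟩) * Polynomial.X ^ wt c d ⟨(r 1, cc 0), hYm 1 0⟩)
        = Polynomial.C (X ⟨(r 0, cc 0), hYm 0 0⟩ * X ⟨(r 1, cc 1), hYm 1 1⟩
            - X ⟨(r 0, cc 1), hYm 0 1⟩ * X ⟨(r 1, cc 0), hYm 1 0⟩)
          * Polynomial.X ^ (wt c d ⟨(r 0, cc 0), hYm 0 0⟩ + wt c d ⟨(r 1, cc 1), hYm 1 1⟩) := by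
      have key : ∀ (z w : MvPolynomial Y k) (p q : ℕ),
          Polynomial.C z * Polynomial.X ^ p * (Polynomial.C w * Polynomial.X ^ q)
            = Polynomial.C (z * w) * Polynomial.X ^ (p + q) := by
        intros; rw [map_mul]; ring
      rw [key, key, hbal, map_sub, sub_mul]
    rw [this]
    apply Ideal.mul_mem_right
    apply Ideal.mem_map_of_mem
    rw [← hdet]
    exact Ideal.subset_span ⟨r, cc, hrm, hcm, hYm, rfl⟩
  exact hmap (Ideal.mem_map_of_mem _ hf)

lemma coeff_Th_mem (hL : IsLadder m n Y) (hcd : IsUpperCorner Y (c, d))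
    {f : MvPolynomial Y k} (hf : f ∈ minorIdeal k 2 Y) (i : ℕ) :
    (Th k Y c d f).coeff i ∈ minorIdeal k 2 Y :=
  Ideal.mem_map_C_iff.mp (Th_mem_map_C hL hcd hf) i

/-- each graded component of any `f` lies in the corresponding power of `Pid` -/
lemma coeff_Th_mem_Pid_pow (f : MvPolynomial Y k) (i : ℕ) :
    (Th k Y c d f).coeff i ∈ Pid k Y c d ^ i := by
  have hTh : Th k Y c d f = ∑ dd ∈ f.support,
      Polynomial.C (monomial dd (coeff dd f)) * Polynomial.X ^ Dw c d dd := by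
    conv_lhs => rw [f.as_sum]
    rw [map_sum]
    exact Finset.sum_congr rfl fun dd _ => Th_monomial dd _
  rw [hTh, Polynomial.finset_sum_coeff]
  apply Ideal.sum_mem
  intro dd _
  rw [Polynomial.coeff_C_mul, Polynomial.coeff_X_pow]
  split_ifs with h
  · rw [mul_one, h]
    exact monomial_mem_Pid_pow dd _
  · simp

/-- elements of `Pid ^ e` have vanishing components below degree `e` -/
lemma coeff_Th_Pid_pow_eq_zero {g : MvPolynomial Y k} (hg : g ∈ Pid k Y c d ^ e)
    {i : ℕ} (hi : i < e) : (Th k Y c d g).coeff i = 0 := by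
  have hmap : Ideal.map (Th k Y c d).toRingHom (Pid k Y c d)
      ≤ Ideal.span {(Polynomial.X : Polynomial (MvPolynomial Y k))} := by
    rw [Pid, Ideal.map_span, Ideal.span_le]
    rintro - ⟨-, ⟨y, hy, rfl⟩, rfl⟩
    simp only [AlgHom.toRingHom_eq_coe, RingHom.coe_coe]
    rw [Th_X]
    simp only [Set.mem_setOf_eq] at hy
    have : wt c d y = 1 := by unfold wt; rw [if_pos hy]
    rw [this, pow_one]
    exact Ideal.mul_mem_left _ _ (Ideal.subset_span rfl)
  have h2 : Th k Y c d g ∈ Ideal.span {(Polynomial.X :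
      Polynomial (MvPolynomial Y k)) ^ e} := by
    have := Ideal.map_pow (Th k Y c d).toRingHom (Pid k Y c d) e
    have hmem : Th k Y c d g ∈ Ideal.map (Th k Y c d).toRingHom (Pid k Y c d ^ e) :=
      Ideal.mem_map_of_mem _ hg
    rw [this] at hmem
    have hle : Ideal.map (Th k Y c d).toRingHom (Pid k Y c d) ^ e
        ≤ Ideal.span {(Polynomial.X : Polynomial (MvPolynomial Y k))} ^ e :=
      Ideal.pow_right_mono hmap e
    rw [Ideal.span_singleton_pow] at hle
    exact hle hmem
  rw [Ideal.mem_span_singleton] at h2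
  obtain ⟨q, hq⟩ := h2
  rw [hq, mul_comm, Polynomial.coeff_mul_X_pow']
  rw [if_neg (by omega)]

/-- the toric parametrization map `X_{pq} ↦ u_p v_q` -/
noncomputable def phiT (k : Type) [Field k] (Y : Set (ℕ × ℕ)) :
    MvPolynomial Y k →ₐ[k] MvPolynomial (ℕ ⊕ ℕ) k :=
  aeval fun y => X (Sum.inl y.1.1) * X (Sum.inr y.1.2)

/-- the multidegree of a monomial under the toric map -/
noncomputable def psiE (dd : Y →₀ ℕ) : (ℕ ⊕ ℕ) →₀ ℕ :=
  dd.sum fun y nn => Finsupp.single (Sum.inl y.1.1) nn + Finsupp.single (Sum.inr y.1.2) nn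

/-- row degree -/
def rowD (dd : Y →₀ ℕ) (r : ℕ) : ℕ := dd.sum fun y nn => if y.1.1 = r then nn else 0

/-- column degree -/
def colD (dd : Y →₀ ℕ) (b : ℕ) : ℕ := dd.sum fun y nn => if y.1.2 = b then nn else 0

lemma psiE_add (dd ee : Y →₀ ℕ) : psiE (dd + ee) = psiE dd + psiE ee :=
  Finsupp.sum_add_index' (fun _ => by simp) (fun y n1 n2 => by
    simp [Finsupp.single_add]; abel)

lemma psiE_single (y : Y) (nn : ℕ) :
    psiE (Finsupp.single y nn) = Finsupp.single (Sum.inl y.1.1) nn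
      + Finsupp.single (Sum.inr y.1.2) nn :=
  Finsupp.sum_single_index (by simp)

lemma rowD_add (dd ee : Y →₀ ℕ) (r : ℕ) :
    rowD (dd + ee) r = rowD dd r + rowD ee r := by
  unfold rowD
  rw [Finsupp.sum_add_index' (fun _ => by simp) (fun y n1 n2 => by split_ifs <;> simp)]

lemma colD_add (dd ee : Y →₀ ℕ) (b : ℕ) :
    colD (dd + ee) b = colD dd b + colD ee b := by
  unfold colD
  rw [Finsupp.sum_add_index' (fun _ => by simp) (fun y n1 n2 => by split_ifs <;> simp)]

lemma rowD_single (y : Y) (nn : ℕ) (r : ℕ) :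
    rowD (Finsupp.single y nn) r = if y.1.1 = r then nn else 0 := by
  unfold rowD
  rw [Finsupp.sum_single_index (by simp)]

lemma colD_single (y : Y) (nn : ℕ) (b : ℕ) :
    colD (Finsupp.single y nn) b = if y.1.2 = b then nn else 0 := by
  unfold colD
  rw [Finsupp.sum_single_index (by simp)]

lemma psiE_apply_inl (dd : Y →₀ ℕ) (r : ℕ) : psiE dd (Sum.inl r) = rowD dd r := by
  classical
  unfold psiE rowD
  rw [Finsupp.sum, Finsupp.sum, Finsupp.finset_sum_apply]
  refine Finset.sum_congr rfl fun y _ => ?_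
  simp [Finsupp.single_apply]

lemma psiE_apply_inr (dd : Y →₀ ℕ) (b : ℕ) : psiE dd (Sum.inr b) = colD dd b := by
  classical
  unfold psiE colD
  rw [Finsupp.sum, Finsupp.sum, Finsupp.finset_sum_apply]
  refine Finset.sum_congr rfl fun y _ => ?_
  simp [Finsupp.single_apply]

lemma psiE_eq_of_rowD_colD {dd ee : Y →₀ ℕ} (hr : ∀ r, rowD dd r = rowD ee r)
    (hc : ∀ b, colD dd b = colD ee b) : psiE dd = psiE ee := by
  ext z
  cases z with
  | inl r => rw [psiE_apply_inl, psiE_apply_inl, hr]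
  | inr b => rw [psiE_apply_inr, psiE_apply_inr, hc]

lemma phiT_monomial (dd : Y →₀ ℕ) (a : k) :
    phiT k Y (monomial dd a) = monomial (psiE dd) a := by
  induction dd using Finsupp.induction generalizing a with
  | zero => simp [psiE, phiT, aeval_monomial, monomial_zero', algebraMap_eq]
  | single_add y nn f hyf hnn ih =>
    have h1 : monomial (Finsupp.single y nn + f) a = X y ^ nn * monomial f a := by
      rw [X_pow_eq_monomial, monomial_mul, one_mul]
    rw [h1, map_mul, map_pow, ih, psiE_add, psiE_single]
    have h2 : phiT k Y (X y) = X (Sum.inl y.1.1) * X (Sum.inr y.1.2) := by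
      simp [phiT]
    rw [h2, mul_pow, X_pow_eq_monomial, X_pow_eq_monomial, monomial_mul, monomial_mul,
      one_mul, one_mul]

/-- standard (chain) exponents: support totally ordered by (row ≤, col ≥) -/
def Std (dd : Y →₀ ℕ) : Prop :=
  ∀ y ∈ dd.support, ∀ z ∈ dd.support,
    (y.1.1 ≤ z.1.1 ∧ z.1.2 ≤ y.1.2) ∨ (z.1.1 ≤ y.1.1 ∧ y.1.2 ≤ z.1.2)

lemma Std.mono {dd ee : Y →₀ ℕ} (h : ee.support ⊆ dd.support) (hS : Std dd) : Std ee :=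
  fun y hy z hz => hS y (h hy) z (h hz)

lemma rowD_eq_zero_iff (dd : Y →₀ ℕ) (r : ℕ) :
    rowD dd r = 0 ↔ ∀ y ∈ dd.support, y.1.1 ≠ r := by
  unfold rowD Finsupp.sum
  rw [Finset.sum_eq_zero_iff]
  constructor
  · intro h y hy hr
    have := h y hy
    simp only [if_pos hr] at this
    exact Finsupp.mem_support_iff.mp hy this
  · intro h y hy
    simp only [if_neg (h y hy)]

lemma colD_eq_zero_iff (dd : Y →₀ ℕ) (b : ℕ) :
    colD dd b = 0 ↔ ∀ y ∈ dd.support, y.1.2 ≠ b := by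
  unfold colD Finsupp.sum
  rw [Finset.sum_eq_zero_iff]
  constructor
  · intro h y hy hr
    have := h y hy
    simp only [if_pos hr] at this
    exact Finsupp.mem_support_iff.mp hy this
  · intro h y hy
    simp only [if_neg (h y hy)]

/-- total mass of an exponent vector -/
def mass (dd : Y →₀ ℕ) : ℕ := dd.sum fun _ nn => nn

lemma mass_add (dd ee : Y →₀ ℕ) : mass (dd + ee) = mass dd + mass ee :=
  Finsupp.sum_add_index' (fun _ => rfl) (fun _ _ _ => rfl)

lemma mass_single (y : Y) (nn : ℕ) : mass (Finsupp.single y nn) = nn :=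
  Finsupp.sum_single_index rfl

lemma mass_eq_zero {dd : Y →₀ ℕ} (h : mass dd = 0) : dd = 0 := by
  unfold mass Finsupp.sum at h
  rw [Finset.sum_eq_zero_iff] at h
  ext y
  by_cases hy : y ∈ dd.support
  · exact h y hy
  · simpa using Finsupp.notMem_support_iff.mp hy

/-- in a chain with minimal row `r` and maximal column `b`, the point `(r, b)`
occurs -/
lemma corner_in_supp {ff : Y →₀ ℕ} (hS : Std ff) {r b : ℕ}
    (hrow : ∀ y ∈ ff.support, r ≤ y.1.1) (hr : ∃ y ∈ ff.support, y.1.1 = r)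
    (hcol : ∀ y ∈ ff.support, y.1.2 ≤ b) (hb : ∃ y ∈ ff.support, y.1.2 = b) :
    ∃ y ∈ ff.support, y.1 = (r, b) := by
  obtain ⟨y2, hy2, hy2r⟩ := hr
  obtain ⟨y1, hy1, hy1b⟩ := hb
  rcases hS y2 hy2 y1 hy1 with ⟨h1, h2⟩ | ⟨h1, h2⟩
  · refine ⟨y2, hy2, ?_⟩
    have := hcol y2 hy2
    have : y2.1.2 = b := by omega
    exact Prod.ext hy2r this
  · refine ⟨y1, hy1, ?_⟩
    have := hrow y1 hy1
    have : y1.1.1 = r := by omega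
    exact Prod.ext this hy1b

/-- standard exponents with equal row and column degrees agree -/
lemma Std_unique : ∀ (N : ℕ) (dd ee : Y →₀ ℕ), mass dd ≤ N → Std dd → Std ee →
    (∀ r, rowD dd r = rowD ee r) → (∀ b, colD dd b = colD ee b) → dd = ee := by
  intro N
  induction N with
  | zero =>
    intro dd ee hm _ _ hr _
    have hdd : dd = 0 := mass_eq_zero (by omega)
    subst hdd
    symm
    ext y
    by_contra hy
    have hy' : y ∈ ee.support := Finsupp.mem_support_iff.mpr (by simpa using hy)
    have h0 : rowD ee y.1.1 = 0 := by rw [← hr]; simp [rowD]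
    exact (rowD_eq_zero_iff ee y.1.1).mp h0 y hy' rfl
  | succ N ih =>
    intro dd ee hm hSd hSe hr hc
    by_cases hdd0 : dd = 0
    · subst hdd0
      symm
      ext y
      by_contra hy
      have hy' : y ∈ ee.support := Finsupp.mem_support_iff.mpr (by simpa using hy)
      have h0 : rowD ee y.1.1 = 0 := by rw [← hr]; simp [rowD]
      exact (rowD_eq_zero_iff ee y.1.1).mp h0 y hy' rfl
    -- minimal row and maximal column of dd
    have hne : dd.support.Nonempty := Finsupp.support_nonempty_iff.mpr hdd0
    have hrowsne : (dd.support.image fun y => y.1.1).Nonempty := hne.image _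
    have hcolsne : (dd.support.image fun y => y.1.2).Nonempty := hne.image _
    set r0 := (dd.support.image fun y => y.1.1).min' hrowsne with hr0
    set b0 := (dd.support.image fun y => y.1.2).max' hcolsne with hb0
    have hrmem : ∃ y ∈ dd.support, y.1.1 = r0 := by
      have := (dd.support.image fun y => y.1.1).min'_mem hrowsne
      rw [Finset.mem_image] at this
      obtain ⟨y, hy, hyy⟩ := this
      exact ⟨y, hy, hyy⟩
    have hrlb : ∀ y ∈ dd.support, r0 ≤ y.1.1 := fun y hy =>
      Finset.min'_le _ _ (Finset.mem_image_of_mem _ hy)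
    have hbmem : ∃ y ∈ dd.support, y.1.2 = b0 := by
      have := (dd.support.image fun y => y.1.2).max'_mem hcolsne
      rw [Finset.mem_image] at this
      obtain ⟨y, hy, hyy⟩ := this
      exact ⟨y, hy, hyy⟩
    have hbub : ∀ y ∈ dd.support, y.1.2 ≤ b0 := by
      intro y hy
      rw [hb0]
      exact Finset.le_max' (dd.support.image fun y => y.1.2) y.1.2
        (Finset.mem_image_of_mem _ hy)
    -- transfer to ee
    have hrowtr : ∀ ρ : ℕ, (∃ y ∈ dd.support, y.1.1 = ρ) ↔ ∃ y ∈ ee.support, y.1.1 = ρ := by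
      intro ρ
      constructor
      · intro ⟨y, hy, hyy⟩
        by_contra hcon
        push_neg at hcon
        have : rowD ee ρ = 0 := (rowD_eq_zero_iff ee ρ).mpr hcon
        rw [← hr] at this
        exact (rowD_eq_zero_iff dd ρ).mp this y hy hyy
      · intro ⟨y, hy, hyy⟩
        by_contra hcon
        push_neg at hcon
        have : rowD dd ρ = 0 := (rowD_eq_zero_iff dd ρ).mpr hcon
        rw [hr] at this
        exact (rowD_eq_zero_iff ee ρ).mp this y hy hyy
    have hcoltr : ∀ ρ : ℕ, (∃ y ∈ dd.support, y.1.2 = ρ) ↔ ∃ y ∈ ee.support, y.1.2 = ρ := by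
      intro ρ
      constructor
      · intro ⟨y, hy, hyy⟩
        by_contra hcon
        push_neg at hcon
        have : colD ee ρ = 0 := (colD_eq_zero_iff ee ρ).mpr hcon
        rw [← hc] at this
        exact (colD_eq_zero_iff dd ρ).mp this y hy hyy
      · intro ⟨y, hy, hyy⟩
        by_contra hcon
        push_neg at hcon
        have : colD dd ρ = 0 := (colD_eq_zero_iff dd ρ).mpr hcon
        rw [hc] at this
        exact (colD_eq_zero_iff ee ρ).mp this y hy hyy
    have hrmem' : ∃ y ∈ ee.support, y.1.1 = r0 := (hrowtr r0).mp hrmem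
    have hbmem' : ∃ y ∈ ee.support, y.1.2 = b0 := (hcoltr b0).mp hbmem
    have hrlb' : ∀ y ∈ ee.support, r0 ≤ y.1.1 := by
      intro y hy
      obtain ⟨z, hz, hzz⟩ := (hrowtr y.1.1).mpr ⟨y, hy, rfl⟩
      have := hrlb z hz
      omega
    have hbub' : ∀ y ∈ ee.support, y.1.2 ≤ b0 := by
      intro y hy
      obtain ⟨z, hz, hzz⟩ := (hcoltr y.1.2).mpr ⟨y, hy, rfl⟩
      have := hbub z hz
      omega
    -- the common corner point
    obtain ⟨y0, hy0, hy0v⟩ := corner_in_supp hSd hrlb hrmem hbub hbmem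
    obtain ⟨z0, hz0, hz0v⟩ := corner_in_supp hSe hrlb' hrmem' hbub' hbmem'
    have hyz : z0 = y0 := Subtype.ext (hz0v.trans hy0v.symm)
    subst hyz
    -- remove one copy and recurse
    have hdy : dd z0 ≠ 0 := Finsupp.mem_support_iff.mp hy0
    have hey : ee z0 ≠ 0 := Finsupp.mem_support_iff.mp hz0
    set dd2 := dd - Finsupp.single z0 1 with hdd2
    set ee2 := ee - Finsupp.single z0 1 with hee2
    have hdec : dd = Finsupp.single z0 1 + dd2 := Finsupp.eq_single_add hdy
    have hdec' : ee = Finsupp.single z0 1 + ee2 := Finsupp.eq_single_add hey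
    have hS2 : Std dd2 := hSd.mono Finsupp.support_tsub
    have hS2' : Std ee2 := hSe.mono Finsupp.support_tsub
    have hm2 : mass dd2 ≤ N := by
      have : mass dd = 1 + mass dd2 := by rw [hdec, mass_add, mass_single]
      omega
    have hr2 : ∀ r, rowD dd2 r = rowD ee2 r := by
      intro r
      have h1 := hr r
      rw [hdec, hdec', rowD_add, rowD_add] at h1
      omega
    have hc2 : ∀ b, colD dd2 b = colD ee2 b := by
      intro b
      have h1 := hc b
      rw [hdec, hdec', colD_add, colD_add] at h1
      omega
    have := ih dd2 ee2 hm2 hS2 hS2' hr2 hc2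
    rw [hdec, hdec', this]

/-- the straightening measure -/
def Qm (dd : Y →₀ ℕ) : ℕ := dd.sum fun y nn => nn * (y.1.1 * y.1.2)

lemma Qm_add (dd ee : Y →₀ ℕ) : Qm (dd + ee) = Qm dd + Qm ee :=
  Finsupp.sum_add_index' (fun _ => zero_mul _) (fun _ _ _ => add_mul _ _ _)

lemma Qm_single (y : Y) (nn : ℕ) : Qm (Finsupp.single y nn) = nn * (y.1.1 * y.1.2) :=
  Finsupp.sum_single_index (zero_mul _)

lemma eq_add_two_single {dd : Y →₀ ℕ} {y z : Y} (hyz : y ≠ z) (hy : dd y ≠ 0)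
    (hz : dd z ≠ 0) :
    dd = (dd - Finsupp.single y 1 - Finsupp.single z 1) + Finsupp.single y 1
      + Finsupp.single z 1 := by
  classical
  ext w
  simp only [Finsupp.add_apply, Finsupp.tsub_apply, Finsupp.single_apply]
  rcases eq_or_ne y w with h | h <;> rcases eq_or_ne z w with h2 | h2
  · exact absurd (h.trans h2.symm) hyz
  · subst h; simp [h2]; omega
  · subst h2; simp [h]; omega
  · simp [h, h2]

/-- one straightening step -/
lemma straighten_step (hL : IsLadder m n Y) (dd : Y →₀ ℕ) {y z : Y}
    (hy : y ∈ dd.support) (hz : z ∈ dd.support)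
    (h1 : y.1.1 < z.1.1) (h2 : y.1.2 < z.1.2) :
    ∃ ee : Y →₀ ℕ, (∀ r, rowD ee r = rowD dd r) ∧ (∀ b, colD ee b = colD dd b) ∧
      Qm ee < Qm dd ∧ monomial dd (1 : k) - monomial ee 1 ∈ minorIdeal k 2 Y := by
  classical
  have hab : (y.1.1, y.1.2) ∈ Y := by rw [Prod.mk.eta]; exact y.2
  have hAB : (z.1.1, z.1.2) ∈ Y := by rw [Prod.mk.eta]; exact z.2
  obtain ⟨hc1, hc2⟩ := hL.2 y.1.1 y.1.2 z.1.1 z.1.2 hab hAB (le_of_lt h1) (le_of_lt h2)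
  set y' : Y := ⟨(y.1.1, z.1.2), hc1⟩ with hy'
  set z' : Y := ⟨(z.1.1, y.1.2), hc2⟩ with hz'
  have hyz : y ≠ z := fun h => by rw [h] at h1; omega
  have hyz' : y' ≠ z' := fun h => by
    have := congrArg (fun w : Y => w.1.1) h
    simp [hy', hz'] at this
    omega
  have hdy : dd y ≠ 0 := Finsupp.mem_support_iff.mp hy
  have hdz : dd z ≠ 0 := Finsupp.mem_support_iff.mp hz
  set rest := dd - Finsupp.single y 1 - Finsupp.single z 1 with hrest
  have hdec : dd = rest + Finsupp.single y 1 + Finsupp.single z 1 :=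
    eq_add_two_single hyz hdy hdz
  refine ⟨rest + Finsupp.single y' 1 + Finsupp.single z' 1, ?_, ?_, ?_, ?_⟩
  · intro r
    conv_rhs => rw [hdec]
    rw [rowD_add, rowD_add, rowD_add, rowD_add, rowD_single, rowD_single,
      rowD_single, rowD_single]
  · intro b
    conv_rhs => rw [hdec]
    rw [colD_add, colD_add, colD_add, colD_add, colD_single, colD_single,
      colD_single, colD_single]
    simp only [hy', hz']
    split_ifs <;> omega
  · conv_rhs => rw [hdec]
    rw [Qm_add, Qm_add, Qm_add, Qm_add, Qm_single, Qm_single, Qm_single, Qm_single]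
    simp only [hy', hz', one_mul]
    have hkey : y.1.1 * z.1.2 + z.1.1 * y.1.2 < y.1.1 * y.1.2 + z.1.1 * z.1.2 := by
      nlinarith
    omega
  · have hXy : ∀ w : Y, (X w : MvPolynomial Y k) = monomial (Finsupp.single w 1) 1 := by
      intro w; rw [← X_pow_eq_monomial, pow_one]
    have hmon1 : monomial dd (1 : k) = monomial rest 1 * X y * X z := by
      rw [hXy, hXy, monomial_mul, monomial_mul, one_mul, one_mul, ← hdec]
    have hmon2 : monomial (rest + Finsupp.single y' 1 + Finsupp.single z' 1) (1 : k)
        = monomial rest 1 * X y' * X z' := by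
      rw [hXy, hXy, monomial_mul, monomial_mul, one_mul, one_mul]
    rw [hmon1, hmon2]
    have hbin := binomial_mem_minorIdeal (k := k) hab hc1 hc2 hAB h1 h2
    have hyy : (X y : MvPolynomial Y k) = X ⟨(y.1.1, y.1.2), hab⟩ := by
      rfl
    have hzz : (X z : MvPolynomial Y k) = X ⟨(z.1.1, z.1.2), hAB⟩ := by
      rfl
    have : monomial rest (1:k) * X y * X z - monomial rest 1 * X y' * X z'
        = monomial rest 1 * (X ⟨(y.1.1, y.1.2), hab⟩ * X ⟨(z.1.1, z.1.2), hAB⟩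
          - X ⟨(y.1.1, z.1.2), hc1⟩ * X ⟨(z.1.1, y.1.2), hc2⟩) := by
      rw [← hyy, ← hzz, hy', hz']
      ring
    rw [this]
    exact Ideal.mul_mem_left _ _ hbin

/-- straightening: every monomial is congruent mod the minor ideal to a standard one -/
lemma straighten (hL : IsLadder m n Y) : ∀ (N : ℕ) (dd : Y →₀ ℕ), Qm dd ≤ N →
    ∃ ee, Std ee ∧ (∀ r, rowD ee r = rowD dd r) ∧ (∀ b, colD ee b = colD dd b) ∧
      monomial dd (1 : k) - monomial ee 1 ∈ minorIdeal k 2 Y := by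
  intro N
  induction N using Nat.strong_induction_on with
  | _ N ih =>
    intro dd hN
    by_cases hS : Std dd
    · exact ⟨dd, hS, fun _ => rfl, fun _ => rfl, by
        rw [sub_self]; exact Ideal.zero_mem _⟩
    · unfold Std at hS
      push_neg at hS
      obtain ⟨y, hy, z, hz, hyz1, hyz2⟩ := hS
      have hstep : ∃ ee : Y →₀ ℕ, (∀ r, rowD ee r = rowD dd r)
          ∧ (∀ b, colD ee b = colD dd b)
          ∧ Qm ee < Qm dd ∧ monomial dd (1 : k) - monomial ee 1 ∈ minorIdeal k 2 Y := by
        rcases le_total y.1.1 z.1.1 with hle | hle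
        · have hc2 : y.1.2 < z.1.2 := hyz1 hle
          have hr1 : y.1.1 < z.1.1 := by
            rcases Nat.lt_or_ge y.1.1 z.1.1 with h | h
            · exact h
            · have := hyz2 (by omega); omega
          exact straighten_step hL dd hy hz hr1 hc2
        · have hc2 : z.1.2 < y.1.2 := hyz2 hle
          have hr1 : z.1.1 < y.1.1 := by
            rcases Nat.lt_or_ge z.1.1 y.1.1 with h | h
            · exact h
            · have := hyz1 (by omega); omega
          exact straighten_step hL dd hz hy hr1 hc2
      obtain ⟨ee, her, hec, heq, hemem⟩ := hstep
      have hlt : Qm ee < N := by omega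
      obtain ⟨ff, hf1, hf2, hf3, hf4⟩ := ih (Qm ee) hlt ee le_rfl
      refine ⟨ff, hf1, fun r => (hf2 r).trans (her r), fun b => (hf3 b).trans (hec b), ?_⟩
      have : monomial dd (1 : k) - monomial ff 1
          = (monomial dd 1 - monomial ee 1) + (monomial ee 1 - monomial ff 1) := by ring
      rw [this]
      exact Ideal.add_mem _ hemem hf4

lemma minorIdeal_le_ker :
    minorIdeal k 2 Y ≤ RingHom.ker (phiT k Y).toRingHom := by
  rw [minorIdeal, Ideal.span_le]
  rintro - ⟨r, cc, hrm, hcm, hYm, rfl⟩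
  rw [SetLike.mem_coe, RingHom.mem_ker]
  have hdet : minorPoly k r cc hYm =
      X ⟨(r 0, cc 0), hYm 0 0⟩ * X ⟨(r 1, cc 1), hYm 1 1⟩
        - X ⟨(r 0, cc 1), hYm 0 1⟩ * X ⟨(r 1, cc 0), hYm 1 0⟩ := by
    rw [minorPoly, Matrix.det_fin_two]; simp only [Matrix.of_apply]
  simp only [AlgHom.toRingHom_eq_coe, RingHom.coe_coe]
  rw [hdet, map_sub, map_mul, map_mul]
  have hX : ∀ (p q : ℕ) (h : (p, q) ∈ Y),
      phiT k Y (X ⟨(p, q), h⟩) = X (Sum.inl p) * X (Sum.inr q) := by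
    intro p q h
    simp [phiT]
  rw [hX, hX, hX, hX]
  ring

lemma psiE_inj_on_Std {dd ee : Y →₀ ℕ} (hd : Std dd) (he : Std ee)
    (h : psiE dd = psiE ee) : dd = ee := by
  refine Std_unique (mass dd) dd ee le_rfl hd he (fun r => ?_) (fun b => ?_)
  · rw [← psiE_apply_inl, ← psiE_apply_inl, h]
  · rw [← psiE_apply_inr, ← psiE_apply_inr, h]

lemma ker_le_minorIdeal (hL : IsLadder m n Y) {f : MvPolynomial Y k}
    (hf : phiT k Y f = 0) : f ∈ minorIdeal k 2 Y := by
  classical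
  choose E hE1 hE2 hE3 hE4 using fun dd : Y →₀ ℕ =>
    straighten (k := k) hL (Qm dd) dd le_rfl
  obtain ⟨sup, cf, hfsum⟩ : ∃ (sup : Finset (Y →₀ ℕ)) (cf : (Y →₀ ℕ) → k),
      f = ∑ dd ∈ sup, monomial dd (cf dd) :=
    ⟨f.support, fun dd => coeff dd f, f.as_sum⟩
  set g : MvPolynomial Y k := ∑ dd ∈ sup, monomial (E dd) (cf dd) with hg
  have hfg : f - g ∈ minorIdeal k 2 Y := by
    rw [hfsum, hg, ← Finset.sum_sub_distrib]
    refine Ideal.sum_mem _ fun dd _ => ?_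
    have : monomial dd (cf dd) - monomial (E dd) (cf dd)
        = C (cf dd) * (monomial dd (1 : k) - monomial (E dd) 1) := by
      rw [mul_sub, C_mul_monomial, C_mul_monomial, mul_one]
    rw [this]
    exact Ideal.mul_mem_left _ _ (hE4 dd)
  have hgker : phiT k Y g = 0 := by
    have h1 : phiT k Y (f - g) = 0 := by
      have := minorIdeal_le_ker (k := k) (Y := Y) hfg
      simpa [RingHom.mem_ker] using this
    rw [map_sub, hf, zero_sub, neg_eq_zero] at h1
    exact h1
  have hgstd : ∀ ee ∈ g.support, Std ee := by
    intro ee hee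
    rw [hg] at hee
    have := MvPolynomial.support_sum (s := sup)
      (f := fun dd => monomial (E dd) (cf dd)) hee
    rw [Finset.mem_biUnion] at this
    obtain ⟨dd, _, hdd⟩ := this
    have := MvPolynomial.support_monomial_subset hdd
    rw [Finset.mem_singleton] at this
    rw [this]
    exact hE1 dd
  have hgcoeff : ∀ ee : Y →₀ ℕ, Std ee → coeff ee g = coeff (psiE ee) (phiT k Y g) := by
    intro ee hee
    rw [hg, map_sum, MvPolynomial.coeff_sum, MvPolynomial.coeff_sum]
    refine Finset.sum_congr rfl fun dd _ => ?_
    rw [phiT_monomial, MvPolynomial.coeff_monomial, MvPolynomial.coeff_monomial]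
    by_cases h : E dd = ee
    · rw [if_pos h, if_pos (by rw [h])]
    · rw [if_neg h, if_neg fun hc => h (psiE_inj_on_Std (hE1 dd) hee hc)]
  have hg0 : g = 0 := by
    by_contra hg0
    obtain ⟨ee, hee⟩ := Finset.nonempty_iff_ne_empty.mpr (mt MvPolynomial.support_eq_empty.mp hg0)
    have h1 : coeff ee g ≠ 0 := MvPolynomial.mem_support_iff.mp hee
    have h2 := hgcoeff ee (hgstd ee hee)
    rw [hgker] at h2
    simp at h2
    exact h1 h2
  rw [hg0, sub_zero] at hfg
  exact hfg

lemma minorIdeal_isPrime (hL : IsLadder m n Y) : (minorIdeal k 2 Y).IsPrime := by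
  have heq : minorIdeal k 2 Y = RingHom.ker (phiT k Y).toRingHom :=
    le_antisymm minorIdeal_le_ker (fun f hf =>
      ker_le_minorIdeal hL (by simpa [RingHom.mem_ker] using hf))
  rw [heq]
  exact RingHom.ker_isPrime _

lemma cornerIdeal_eq_map :
    cornerIdeal k Y c d = (Pid k Y c d).map (Ideal.Quotient.mk (minorIdeal k 2 Y)) := by
  rw [cornerIdeal, Pid, Ideal.map_span, ← Set.image_comp]
  congr 1
  ext z
  constructor
  · rintro ⟨p, q, h, hp, hq, rfl⟩
    exact ⟨⟨(p, q), h⟩, ⟨hp, hq⟩, rfl⟩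
  · rintro ⟨y, ⟨hp, hq⟩, rfl⟩
    exact ⟨y.1.1, y.1.2, by rw [Prod.mk.eta]; exact y.2, hp, hq, rfl⟩

lemma mem_map_of_mem_sup {J : Ideal (MvPolynomial Y k)} {f : MvPolynomial Y k}
    (h : f ∈ J ⊔ minorIdeal k 2 Y) :
    Ideal.Quotient.mk (minorIdeal k 2 Y) f
      ∈ J.map (Ideal.Quotient.mk (minorIdeal k 2 Y)) := by
  obtain ⟨p, hp, q, hq, rfl⟩ := Submodule.mem_sup.mp h
  have : Ideal.Quotient.mk (minorIdeal k 2 Y) (p + q)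
      = Ideal.Quotient.mk (minorIdeal k 2 Y) p := by
    rw [map_add, Ideal.Quotient.eq_zero_iff_mem.mpr hq, add_zero]
  rw [this]
  exact Ideal.mem_map_of_mem _ hp

lemma mem_sup_of_low_coeffs (f : MvPolynomial Y k) (e : ℕ)
    (h : ∀ i < e, (Th k Y c d f).coeff i ∈ minorIdeal k 2 Y) :
    f ∈ Pid k Y c d ^ e ⊔ minorIdeal k 2 Y := by
  have hf : f = ∑ i ∈ Finset.range ((Th k Y c d f).natDegree + 1),
      (Th k Y c d f).coeff i := by
    conv_lhs => rw [← eval_one_Th (c := c) (d := d) f]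
    rw [Polynomial.eval_eq_sum_range]
    simp
  rw [hf]
  refine Ideal.sum_mem _ fun i _ => ?_
  by_cases hi : i < e
  · exact Ideal.mem_sup_right (h i hi)
  · refine Ideal.mem_sup_left ?_
    exact Ideal.pow_le_pow_right (by omega) (coeff_Th_mem_Pid_pow f i)

end Proof

/-- In `R = R_2(Y)` for a `2`-connected ladder `Y`, the symbolic powers
of the height-one primes `𝔭_j` (generated by the residues of the variables `x_{pq}` with
`p ≤ c_j`, `q ≤ d_j`, for an upper inside corner `(c_j, d_j)`) coincide with the ordinary
powers: if `s ∉ 𝔭_j` and `s * x ∈ 𝔭_j ^ e` then `x ∈ 𝔭_j ^ e`. -/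
theorem symbolicPower_p_eq_power (m n : ℕ) (k : Type) [Field k] (Y : Set (ℕ × ℕ))
    (hY : StdLadder m n Y) (hconn : TConnected m n 2 Y)
    (c d : ℕ) (hcd : IsUpperCorner Y (c, d))
    (e : ℕ) (x s : LadderRing k 2 Y)
    (hs : s ∉ cornerIdeal k Y c d) (hsx : s * x ∈ cornerIdeal k Y c d ^ e) :
    x ∈ cornerIdeal k Y c d ^ e := by
    classical
  have hL : IsLadder m n Y := hY.1
  have hprime : (minorIdeal k 2 Y).IsPrime := minorIdeal_isPrime (m := m) (n := n) hL
  obtain ⟨x', rfl⟩ := Ideal.Quotient.mk_surjective x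
  obtain ⟨s', rfl⟩ := Ideal.Quotient.mk_surjective s
  -- translate the hypothesis on s
  have hs0 : (Th k Y c d s').coeff 0 ∉ minorIdeal k 2 Y := by
    intro h0
    apply hs
    rw [cornerIdeal_eq_map]
    refine mem_map_of_mem_sup ?_
    have := mem_sup_of_low_coeffs s' 1 (fun i hi => by
      have : i = 0 := by omega
      rw [this]; exact h0)
    rwa [pow_one] at this
  -- translate the hypothesis on s * x
  rw [cornerIdeal_eq_map, ← Ideal.map_pow,
    Ideal.mem_map_iff_of_surjective _ Ideal.Quotient.mk_surjective] at hsx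
  obtain ⟨g, hg, hgeq⟩ := hsx
  have hdiff : s' * x' - g ∈ minorIdeal k 2 Y := by
    refine (Ideal.Quotient.eq).mp ?_
    rw [map_mul]
    exact hgeq.symm
  have hsxcoeff : ∀ i < e, (Th k Y c d (s' * x')).coeff i ∈ minorIdeal k 2 Y := by
    intro i hi
    have : s' * x' = g + (s' * x' - g) := by ring
    rw [this, map_add, Polynomial.coeff_add]
    refine Ideal.add_mem _ ?_ ?_
    · rw [coeff_Th_Pid_pow_eq_zero hg hi]
      exact Ideal.zero_mem _
    · exact coeff_Th_mem hL hcd hdiff i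
  -- the key induction: low components of x' lie in the minor ideal
  have hx : ∀ i, i < e → (Th k Y c d x').coeff i ∈ minorIdeal k 2 Y := by
    intro i
    induction i using Nat.strong_induction_on with
    | _ i ih =>
      intro hie
      have hmul : (Th k Y c d (s' * x')).coeff i
          = ∑ p ∈ Finset.HasAntidiagonal.antidiagonal i,
              (Th k Y c d s').coeff p.1 * (Th k Y c d x').coeff p.2 := by
        rw [map_mul, Polynomial.coeff_mul]
      have h0i : ((0 : ℕ), i) ∈ Finset.HasAntidiagonal.antidiagonal i := by
        simp
      rw [← Finset.add_sum_erase _ _ h0i] at hmul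
      have hrest : ∑ p ∈ (Finset.HasAntidiagonal.antidiagonal i).erase (0, i),
          (Th k Y c d s').coeff p.1 * (Th k Y c d x').coeff p.2
            ∈ minorIdeal k 2 Y := by
        refine Ideal.sum_mem _ fun p hp => ?_
        rw [Finset.mem_erase, Finset.HasAntidiagonal.mem_antidiagonal] at hp
        have hp2 : p.2 < i := by
          rcases Nat.lt_or_ge p.2 i with h | h
          · exact h
          · exfalso
            have : p.2 = i := by omega
            have : p = (0, i) := by
              have : p.1 = 0 := by omega
              exact Prod.ext this (by omega)
            exact hp.1 this
        exact Ideal.mul_mem_left _ _ (ih p.2 hp2 (by omega))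
      have hkey : (Th k Y c d s').coeff 0 * (Th k Y c d x').coeff i
          ∈ minorIdeal k 2 Y := by
        have h1 := hsxcoeff i hie
        rw [hmul] at h1
        have := Ideal.sub_mem _ h1 hrest
        simpa using this
      rcases hprime.mem_or_mem hkey with h | h
      · exact absurd h hs0
      · exact h
  -- conclude
  rw [cornerIdeal_eq_map, ← Ideal.map_pow]
  exact mem_map_of_mem_sup (mem_sup_of_low_coeffs x' e hx)

end LadderDet
end

section
/- Let Y be a 2-connected ladder, π : k[Y] → R_2(Y) the quotient map, i ∈ {1,…,h+1}, and e ≥ 1. Let Q_i be the ideal of k[Y] generated by the variables X_{a_{i−1},q} with (a_{i−1},q) ∈ Y, and let J = Q_i^e. Then for every monomial ideal M of k[Y], the images satisfy π(J) ∩ π(M) = π(J ∩ M) as ideals of R_2(Y); in particular π(J) ∩ π(M) is generated by the images of the least common multiples of the monomial generators of J and of M. -/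
set_option maxHeartbeats 1000000
set_option synthInstance.maxHeartbeats 1000000

open CategoryTheory

/-! Grade `k[Y]` by the number of factors taken from row `r`. The minors of `X` and all monomials
are homogeneous for this grading, so `I_2(Y)` and `M` are stable under the projection `P` onto the
part of degree `≥ e`, and `Q ^ e` is exactly the image of `P`. Hence if `π f = π g` with
`f ∈ Q ^ e` and `g ∈ M`, then `f = P f ≡ P g` modulo `I_2(Y)`, and `P g ∈ Q ^ e ∩ M`. -/

theorem Ideal.map_mk_inf_map_mk_eq_of_retraction {A : Type*} [CommRing A] {I J M : Ideal A}
    (P : A →+ A) (hPI : ∀ a ∈ I, P a ∈ I) (hPM : ∀ a ∈ M, P a ∈ M) (hPJ : ∀ a, P a ∈ J)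
    (hP : ∀ a ∈ J, P a = a) :
    J.map (Ideal.Quotient.mk I) ⊓ M.map (Ideal.Quotient.mk I) =
      (J ⊓ M).map (Ideal.Quotient.mk I) := by
  refine le_antisymm ?_ (le_inf (Ideal.map_mono inf_le_left) (Ideal.map_mono inf_le_right))
  rintro x ⟨hxJ, hxM⟩
  obtain ⟨f, hf, rfl⟩ := (Ideal.mem_map_iff_of_surjective _ Ideal.Quotient.mk_surjective).mp hxJ
  obtain ⟨g, hg, hgf⟩ := (Ideal.mem_map_iff_of_surjective _ Ideal.Quotient.mk_surjective).mp hxM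
  have hf_eq : Ideal.Quotient.mk I f = Ideal.Quotient.mk I (P g) := by
    rw [Ideal.Quotient.eq, ← hP f hf, ← map_sub]
    exact hPI _ (Ideal.Quotient.eq.mp hgf.symm)
  rw [hf_eq]
  exact Ideal.mem_map_of_mem _ ⟨hPJ g, hPM g hg⟩

namespace MvPolynomial

attribute [local instance] weightedGradedAlgebra

open Finsupp
open scoped Pointwise

variable {σ R : Type*}

section CommSemiring

variable [CommSemiring R]

theorem isHomogeneous_span_monomial {M : Type*} [AddCommMonoid M] [DecidableEq M] (w : σ → M)
    (S : Set (σ →₀ ℕ)) :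
    (Ideal.span ((fun d => monomial d (1 : R)) '' S)).IsHomogeneous
      (weightedHomogeneousSubmodule R w) :=
  Ideal.homogeneous_span _ _ <| by
    rintro _ ⟨d, -, rfl⟩
    exact ⟨weight w d, isWeightedHomogeneous_monomial w d 1 rfl⟩

theorem isUpperSet_le_weight (w : σ → ℕ) (n : ℕ) : IsUpperSet {d : σ →₀ ℕ | n ≤ weight w d} := by
  intro d d' hdd' hd
  obtain ⟨c, rfl⟩ := le_iff_exists_add.mp hdd'
  simp only [Set.mem_ofPred_eq, map_add] at hd ⊢
  omega

theorem monomial_mem_pow_span_X_image {s : Set σ} {n : ℕ} {d : σ →₀ ℕ}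
    (hd : n ≤ weight (s.indicator 1) d) (c : R) :
    monomial d c ∈ Ideal.span (X '' s) ^ n := by
  induction n generalizing d with
  | zero => simp
  | succ n ih =>
    obtain ⟨i, hi, hdi⟩ : ∃ i ∈ s, d i ≠ 0 := by
      by_contra! h
      have : weight (s.indicator 1) d = 0 := by
        rw [weight_apply, Finsupp.sum]
        refine Finset.sum_eq_zero fun i _ => ?_
        by_cases hi : i ∈ s <;> simp [hi, h]
      omega
    have hw := weight_sub_single_add (w := s.indicator (1 : σ → ℕ)) hdi
    rw [Set.indicator_of_mem hi] at hw
    rw [← sub_add_single_one_cancel hdi, ← mul_one c, ← monomial_mul, pow_succ]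
    exact Ideal.mul_mem_mul (ih (by simp at hw; omega)) (Ideal.subset_span ⟨i, hi, rfl⟩)

theorem isWeightedHomogeneous_of_mem_image_X_pow {s : Set σ} {n : ℕ} {x : MvPolynomial σ R}
    (hx : x ∈ (X '' s : Set (MvPolynomial σ R)) ^ n) :
    IsWeightedHomogeneous (s.indicator 1) x n := by
  induction n generalizing x with
  | zero =>
    rw [pow_zero, Set.mem_one] at hx
    exact hx ▸ isWeightedHomogeneous_one R _
  | succ n ih =>
    obtain ⟨a, ha, _, ⟨i, hi, rfl⟩, rfl⟩ := Set.mem_mul.mp (pow_succ (X (R := R) '' s) n ▸ hx)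
    simpa [hi] using (ih ha).mul (isWeightedHomogeneous_X R (s.indicator 1) i)

theorem mem_pow_span_X_image_iff (s : Set σ) (n : ℕ) (p : MvPolynomial σ R) :
    p ∈ Ideal.span (X '' s) ^ n ↔ ∀ d ∈ p.support, n ≤ weight (s.indicator 1) d := by
  refine ⟨fun hp => ?_, fun hp => ?_⟩
  · have hle : Ideal.span (X '' s) ^ n ≤
        restrictSupportIdeal R _ (isUpperSet_le_weight (s.indicator 1) n) := by
      rw [Ideal.span, Submodule.span_pow, ← Ideal.span, Ideal.span_le]
      exact fun x hx d hd =>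
        (isWeightedHomogeneous_of_mem_image_X_pow hx (mem_support_iff.mp hd)).ge
    exact fun d hd => hle hp hd
  · rw [← support_sum_monomial_coeff p]
    exact Ideal.sum_mem _ fun d hd => monomial_mem_pow_span_X_image (hp d hd) _

end CommSemiring

section CommRing

variable [CommRing R]

noncomputable def weightedTail (w : σ → ℕ) (e : ℕ) : MvPolynomial σ R →ₗ[R] MvPolynomial σ R :=
  LinearMap.id - ∑ n ∈ Finset.range e, weightedHomogeneousComponent w n

theorem coeff_weightedTail (w : σ → ℕ) (e : ℕ) (p : MvPolynomial σ R) (d : σ →₀ ℕ) :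
    coeff d (weightedTail w e p) = if e ≤ weight w d then coeff d p else 0 := by
  simp only [weightedTail, LinearMap.sub_apply, LinearMap.id_apply, LinearMap.sum_apply,
    coeff_sub, coeff_sum, coeff_weightedHomogeneousComponent, Finset.sum_ite_eq, Finset.mem_range]
  split_ifs <;> first | omega | simp

theorem le_weight_of_mem_support_weightedTail {w : σ → ℕ} {e : ℕ} {p : MvPolynomial σ R}
    {d : σ →₀ ℕ} (hd : d ∈ (weightedTail w e p).support) : e ≤ weight w d := by
  by_contra h
  simp [coeff_weightedTail, h] at hd

theorem weightedTail_eq_self {w : σ → ℕ} {e : ℕ} {p : MvPolynomial σ R}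
    (hp : ∀ d ∈ p.support, e ≤ weight w d) : weightedTail w e p = p := by
  ext d
  rw [coeff_weightedTail]
  split_ifs with h
  · rfl
  · exact (notMem_support_iff.mp fun hd => h (hp d hd)).symm

theorem weightedTail_mem {w : σ → ℕ} (e : ℕ) {I : Ideal (MvPolynomial σ R)}
    (hI : I.IsHomogeneous (weightedHomogeneousSubmodule R w)) {p : MvPolynomial σ R}
    (hp : p ∈ I) : weightedTail w e p ∈ I := by
  refine I.sub_mem hp ?_
  rw [LinearMap.sum_apply]
  exact I.sum_mem fun n _ => weightedHomogeneousComponent_mem_of_mem R w hI hp n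

end CommRing

end MvPolynomial

namespace LadderDet

open MvPolynomial

attribute [local instance] weightedGradedAlgebra

section RowGrading

variable {k : Type} [Field k] {Y : Set (ℕ × ℕ)}

theorem isWeightedHomogeneous_minorPoly {M : Type*} [AddCommMonoid M] (ρ : ℕ → M) {t : ℕ}
    (r c : Fin t → ℕ) (h : ∀ u v, (r u, c v) ∈ Y) :
    IsWeightedHomogeneous (fun v : Y => ρ (v : ℕ × ℕ).1) (minorPoly k r c h) (∑ u, ρ (r u)) := by
  rw [minorPoly, Matrix.det_apply]
  refine IsWeightedHomogeneous.sum _ _ _ fun τ _ => ?_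
  have hprod := IsWeightedHomogeneous.prod Finset.univ
    (fun u => (X ⟨(r (τ u), c u), h (τ u) u⟩ : MvPolynomial Y k)) (fun u => ρ (r (τ u)))
    (w := fun v : Y => ρ (v : ℕ × ℕ).1) fun u _ => isWeightedHomogeneous_X k _ _
  rw [Equiv.sum_comp τ (fun u => ρ (r u))] at hprod
  rcases Int.units_eq_one_or (Equiv.Perm.sign τ) with hτ | hτ
  · simpa [hτ] using hprod
  · simpa [hτ] using hprod.neg

theorem minorIdeal_isHomogeneous {M : Type*} [AddCommMonoid M] [DecidableEq M] (ρ : ℕ → M)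
    (t : ℕ) :
    (minorIdeal k t Y).IsHomogeneous
      (weightedHomogeneousSubmodule k fun v : Y => ρ (v : ℕ × ℕ).1) :=
  Ideal.homogeneous_span _ _ <| by
    rintro _ ⟨r, c, -, -, h, rfl⟩
    exact ⟨_, isWeightedHomogeneous_minorPoly ρ r c h⟩

theorem setOf_X_row_eq_image (r : ℕ) :
    {f | ∃ q, ∃ h : (r, q) ∈ Y, f = (X ⟨(r, q), h⟩ : MvPolynomial Y k)} =
      X '' {v : Y | (v : ℕ × ℕ).1 = r} := by
  ext f
  constructor
  · rintro ⟨q, h, rfl⟩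
    exact ⟨⟨(r, q), h⟩, rfl, rfl⟩
  · rintro ⟨⟨⟨_, q⟩, h⟩, rfl, rfl⟩
    exact ⟨q, h, rfl⟩

end RowGrading

theorem image_inter_Q_pow_general (k : Type) [Field k] (Y : Set (ℕ × ℕ))
    (r : ℕ)
    (Q : Ideal (MvPolynomial Y k))
    (hQ : Q = Ideal.span {f | ∃ q, ∃ h : (r, q) ∈ Y, f = MvPolynomial.X ⟨(r, q), h⟩})
    (e : ℕ)
    (M : Ideal (MvPolynomial Y k)) (hM : IsMonomialIdeal M)
    (π : MvPolynomial Y k →+* LadderRing k 2 Y)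
    (hπ : π = Ideal.Quotient.mk (minorIdeal k 2 Y)) :
    Ideal.map π (Q ^ e) ⊓ Ideal.map π M = Ideal.map π (Q ^ e ⊓ M) := by
  obtain ⟨S, rfl⟩ := hM
  let row : Set Y := {v | (v : ℕ × ℕ).1 = r}
  have hw : row.indicator 1 = fun v : Y => ({r} : Set ℕ).indicator (1 : ℕ → ℕ) (v : ℕ × ℕ).1 := by
    ext v
    simp [Set.indicator_apply, row]
  rw [hQ, setOf_X_row_eq_image, hπ]
  refine Ideal.map_mk_inf_map_mk_eq_of_retraction (weightedTail (row.indicator 1) e).toAddMonoidHom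
    (fun p hp => weightedTail_mem e (hw ▸ minorIdeal_isHomogeneous _ 2) hp)
    (fun p hp => weightedTail_mem e (isHomogeneous_span_monomial _ S) hp)
    (fun p => (mem_pow_span_X_image_iff _ _ _).mpr fun d hd =>
      le_weight_of_mem_support_weightedTail hd)
    (fun p hp => weightedTail_eq_self ((mem_pow_span_X_image_iff _ _ _).mp hp))

/-- Let `Y` be a `2`-connected ladder, `π : k[Y] → R_2(Y)` the quotient
map, `Q` the ideal of `k[Y]` generated by the variables in row `a_{i-1}` (where `a_0 = 1`
and `a_1, …, a_h` are the rows of the lower inside corners), `J = Q ^ e` with `e ≥ 1`.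
Then for every monomial ideal `M` of `k[Y]` one has `π(J) ∩ π(M) = π(J ∩ M)`. -/
theorem image_inter_Q_pow (m n : ℕ) (k : Type) [Field k] (Y : Set (ℕ × ℕ))
    (hY : StdLadder m n Y) (hconn : TConnected m n 2 Y)
    (r : ℕ) (hr : r = 1 ∨ ∃ b, IsLowerCorner Y (r, b))
    (Q : Ideal (MvPolynomial Y k))
    (hQ : Q = Ideal.span {f | ∃ q, ∃ h : (r, q) ∈ Y, f = MvPolynomial.X ⟨(r, q), h⟩})
    (e : ℕ) (he : 1 ≤ e)
    (M : Ideal (MvPolynomial Y k)) (hM : IsMonomialIdeal M)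
    (π : MvPolynomial Y k →+* LadderRing k 2 Y)
    (hπ : π = Ideal.Quotient.mk (minorIdeal k 2 Y)) :
    Ideal.map π (Q ^ e) ⊓ Ideal.map π M = Ideal.map π (Q ^ e ⊓ M) :=
  image_inter_Q_pow_general k Y r Q hQ e M hM π hπ

end LadderDet
end
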